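/- arXiv:1508.04996 — 8 statements merged into one kernel-verified Lean document; each statement's English description precedes it below -/
import Mathlib

section
/- The action of the group GL(3, F₂) on the projective plane ℙ²(F₈) — where a matrix over F₂ acts on ℙ²(F₈) via the entrywise inclusion F₂ ↪ F₈ — has exactly three orbits. -/
noncomputable section

abbrev F₂ : Type := ZMod 2
abbrev F₈ : Type := GaloisField 2 3

/-- The projective plane over `F₈`. -/
abbrev ProjPlane : Type := Projectivization F₈ (Fin 3 → F₈)

/-- `GL(3, F₂)` mapped into the group of `F₈`-linear automorphisms of `F₈³`,
via the entrywise inclusion `F₂ ↪ F₈`. -/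
def actHom : GL (Fin 3) F₂ →* ((Fin 3 → F₈) ≃ₗ[F₈] (Fin 3 → F₈)) :=
  ((LinearMap.GeneralLinearGroup.generalLinearEquiv F₈ (Fin 3 → F₈)).toMonoidHom.comp
      (Matrix.GeneralLinearGroup.toLin (n := Fin 3) (R := F₈)).toMonoidHom).comp
    (Units.map ((algebraMap F₂ F₈).mapMatrix).toMonoidHom)

/-- The action of `GL(3, F₂)` on the projective plane `ℙ²(F₈)`. -/
instance : MulAction (GL (Fin 3) F₂) ProjPlane where
  smul g p := p.map (actHom g).toLinearMap (actHom g).injective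
  one_smul p := by
    show p.map (actHom 1).toLinearMap (actHom 1).injective = p
    simp only [map_one]
    exact congrFun Projectivization.map_id p
  mul_smul g h p := by
    show p.map (actHom (g * h)).toLinearMap (actHom (g * h)).injective = _
    simp only [map_mul]
    exact congrFun (Projectivization.map_comp (actHom h).toLinearMap (actHom h).injective
      (actHom g).toLinearMap (actHom g).injective) p

/-!
A vector `v ∈ F₈³` is the same as the F₂-linear map `F₂³ → F₈`, `x ↦ ∑ xᵢ vᵢ`: matrices in
`GL(3, F₂)` act on it by precomposition and scalars in `F₈ˣ` by postcomposition. Two linear maps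
with the same image differ by an automorphism of the source, so the orbit of `[v]` is determined
by the `F₈ˣ`-orbit of the F₂-span of the coordinates of `v`. This span has dimension 1, 2 or 3,
and `F₈ˣ` is transitive on the F₂-subspaces of each dimension: lines are translates of `F₂`, and
planes are translates of `ker Tr` because the trace form is nondegenerate.
-/

open Module Submodule Set Matrix Pointwise

namespace LinearMap

variable {K V W : Type*} [DivisionRing K] [AddCommGroup V] [Module K V]
  [AddCommGroup W] [Module K W]

theorem exists_linearEquiv_prod_ker_range (f : V →ₗ[K] W) :
    ∃ e : V ≃ₗ[K] ker f × range f, ∀ x, ((e x).2 : W) = f x := by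
  obtain ⟨C, hC⟩ := (ker f).exists_isCompl
  refine ⟨equivProdOfSurjectiveOfIsCompl ((ker f).projectionOnto C hC) f.rangeRestrict
    (range_projectionOnto hC) (range_rangeRestrict f) ?_, fun x => rfl⟩
  rw [ker_projectionOnto, ker_rangeRestrict]
  exact hC.symm

theorem exists_linearEquiv_comp_eq_of_range_eq [FiniteDimensional K V] {f g : V →ₗ[K] W}
    (h : range f = range g) : ∃ φ : V ≃ₗ[K] V, f ∘ₗ φ = g := by
  obtain ⟨ef, hef⟩ := exists_linearEquiv_prod_ker_range f
  obtain ⟨eg, heg⟩ := exists_linearEquiv_prod_ker_range g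
  have hker : finrank K (ker g) = finrank K (ker f) := by
    have := f.finrank_range_add_finrank_ker
    have := g.finrank_range_add_finrank_ker
    rw [h] at *
    omega
  refine ⟨eg.trans (((LinearEquiv.ofFinrankEq _ _ hker).prodCongr
    (LinearEquiv.ofEq _ _ h.symm)).trans ef.symm), LinearMap.ext fun x => ?_⟩
  simp [← hef, ← heg]

end LinearMap

section SubfieldMatrix

variable {K L ι : Type*} [Field K] [Field L] [Algebra K L] [Fintype ι]

theorem span_range_map_mulVec_le (A : Matrix ι ι K) (v : ι → L) :
    span K (range ((A.map (algebraMap K L)) *ᵥ v)) ≤ span K (range v) := by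
  rw [span_le]
  rintro _ ⟨i, rfl⟩
  simp only [Matrix.mulVec, dotProduct, Matrix.map_apply, ← Algebra.smul_def]
  exact sum_mem fun j _ => smul_mem _ _ (subset_span ⟨j, rfl⟩)

theorem exists_GL_map_mulVec_eq_iff [DecidableEq ι] {v w : ι → L} :
    (∃ g : GL ι K, (g.val.map (algebraMap K L)) *ᵥ v = w) ↔
      span K (range v) = span K (range w) := by
  constructor
  · rintro ⟨g, rfl⟩
    refine ((span_range_map_mulVec_le _ v).antisymm ?_).symm
    have h : v = (g⁻¹.val.map (algebraMap K L)) *ᵥ ((g.val.map (algebraMap K L)) *ᵥ v) := by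
      rw [Matrix.mulVec_mulVec, ← Matrix.map_mul, Units.inv_mul,
        Matrix.map_one _ (map_zero _) (map_one _), Matrix.one_mulVec]
    conv_lhs => rw [h]
    exact span_range_map_mulVec_le _ _
  · intro h
    rw [← Fintype.range_linearCombination, ← Fintype.range_linearCombination] at h
    obtain ⟨φ, hφ⟩ := LinearMap.exists_linearEquiv_comp_eq_of_range_eq h
    -- row `i` of the matrix must be the coefficient vector `φ (Pi.single i 1)`
    have hunit : IsUnit (LinearMap.toMatrix' φ.toLinearMap)ᵀ := by
      rw [Matrix.isUnit_transpose, Matrix.isUnit_iff_isUnit_det, LinearMap.det_toMatrix']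
      exact φ.isUnit_det'
    refine ⟨hunit.unit, funext fun i => ?_⟩
    have hw := congrArg (· (Pi.single i 1)) hφ
    rw [LinearMap.comp_apply, Fintype.linearCombination_apply_single, one_smul,
      Fintype.linearCombination_apply] at hw
    rw [← hw]
    simp only [Matrix.mulVec, dotProduct, Matrix.map_apply, IsUnit.unit_spec,
      Matrix.transpose_apply, LinearMap.toMatrix'_apply, Algebra.smul_def, LinearEquiv.coe_coe]

end SubfieldMatrix

section UnitsSmulSubmodule

variable {K L : Type*} [Field K] [Field L] [Algebra K L]

theorem span_range_units_smul {ι : Type*} (c : Lˣ) (v : ι → L) :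
    span K (range (c • v)) = c • span K (range v) := by
  rw [Units.smul_def, Units.smul_def, ← span_smul, ← range_smul]
  rfl

theorem finrank_units_smul (c : Lˣ) (U : Submodule K L) : finrank K ↥(c • U) = finrank K U :=
  (DistribMulAction.toLinearEquiv K L c).finrank_map_eq U

theorem exists_units_smul_span_one_eq {U : Submodule K L} (hU : finrank K U = 1) :
    ∃ a : Lˣ, a • (K ∙ (1 : L)) = U := by
  have : FiniteDimensional K U := .of_finrank_eq_succ hU
  obtain ⟨u, huU, hu⟩ := U.exists_mem_ne_zero_of_ne_bot
    (fun h => by rw [h, finrank_bot] at hU; omega)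
  refine ⟨Units.mk0 u hu, ?_⟩
  rw [Units.smul_def, smul_span, smul_set_singleton,
    eq_span_singleton_of_mem_of_finrank_eq_one hU huU hu]
  simp

theorem exists_units_smul_ker_trace_eq [FiniteDimensional K L] [Algebra.IsSeparable K L]
    {U : Submodule K L} (hU : finrank K U + 1 = finrank K L) :
    ∃ a : Lˣ, a • LinearMap.ker (Algebra.trace K L) = U := by
  have hlt : U < ⊤ := lt_top_iff_ne_top.2 fun h => by
    rw [h, finrank_top] at hU; omega
  obtain ⟨f, hf, hUf⟩ := U.exists_le_ker_of_lt_top hlt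
  have hUeq : U = LinearMap.ker f := eq_of_le_of_finrank_eq hUf
    (by have := Module.Dual.finrank_ker_add_one_of_ne_zero hf; omega)
  set b := ((Algebra.traceForm K L).toDual (traceForm_nondegenerate K L)).symm f
  have hb : ∀ x, Algebra.trace K L (b * x) = f x := fun x => by
    rw [← Algebra.traceForm_apply, LinearMap.BilinForm.apply_toDual_symm_apply]
  have hb0 : b ≠ 0 := fun h => hf (LinearMap.ext fun x => by simp [← hb, h])
  refine ⟨(Units.mk0 b hb0)⁻¹, SetLike.ext fun x => ?_⟩
  rw [hUeq, ← SetLike.mem_coe, Units.smul_def, coe_pointwise_smul, ← Units.smul_def,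
    mem_smul_set_iff_inv_smul_mem, inv_inv]
  simp [Units.smul_def, ← hb]

theorem exists_units_smul_eq_of_finrank_eq_one {U U' : Submodule K L} (hU : finrank K U = 1)
    (hU' : finrank K U' = 1) : ∃ c : Lˣ, c • U = U' := by
  obtain ⟨a, rfl⟩ := exists_units_smul_span_one_eq hU
  obtain ⟨a', rfl⟩ := exists_units_smul_span_one_eq hU'
  exact ⟨a' * a⁻¹, by rw [mul_smul, inv_smul_smul]⟩

theorem exists_units_smul_eq_of_finrank_add_one_eq [FiniteDimensional K L]
    [Algebra.IsSeparable K L] {U U' : Submodule K L} (hU : finrank K U + 1 = finrank K L)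
    (hU' : finrank K U' + 1 = finrank K L) : ∃ c : Lˣ, c • U = U' := by
  obtain ⟨a, rfl⟩ := exists_units_smul_ker_trace_eq hU
  obtain ⟨a', rfl⟩ := exists_units_smul_ker_trace_eq hU'
  exact ⟨a' * a⁻¹, by rw [mul_smul, inv_smul_smul]⟩

theorem exists_units_smul_eq_of_finrank_eq [FiniteDimensional K L] [Algebra.IsSeparable K L]
    (hL : finrank K L ≤ 3) {U U' : Submodule K L} (h : finrank K U = finrank K U') :
    ∃ c : Lˣ, c • U = U' := by
  have hle := U.finrank_le
  obtain h0 | h1 | h2 | h3 : finrank K U = 0 ∨ finrank K U = 1 ∨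
      finrank K U + 1 = finrank K L ∨ finrank K U = finrank K L := by omega
  · exact ⟨1, by rw [one_smul, finrank_eq_zero.1 h0, finrank_eq_zero.1 (h.symm.trans h0)]⟩
  · exact exists_units_smul_eq_of_finrank_eq_one h1 (h ▸ h1)
  · exact exists_units_smul_eq_of_finrank_add_one_eq h2 (h ▸ h2)
  · exact ⟨1, by rw [one_smul, eq_top_of_finrank_eq h3, eq_top_of_finrank_eq (h.symm.trans h3)]⟩

end UnitsSmulSubmodule

theorem MulAction.card_orbitRel_quotient_eq_card_range {G α β : Type*} [Group G] [MulAction G α]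
    (f : α → β) (hf : ∀ x y, f x = f y ↔ x ∈ orbit G y) :
    Nat.card (orbitRel.Quotient G α) = Nat.card (range f) := by
  let F : orbitRel.Quotient G α → β := Quotient.lift (s := orbitRel G α) f fun x y h => (hf x y).2 h
  have hF : Function.Injective F := by
    rintro ⟨x⟩ ⟨y⟩ h
    exact Quotient.sound ((hf x y).1 h)
  rw [← Nat.card_range_of_injective hF, Set.range_quotient_lift (s := orbitRel G α)]

theorem finrank_F₈ : finrank F₂ F₈ = 3 := GaloisField.finrank 2 three_ne_zero

theorem smul_mk (g : GL (Fin 3) F₂) (v : Fin 3 → F₈) (hv : v ≠ 0) :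
    g • Projectivization.mk F₈ v hv =
      Projectivization.mk F₈ ((g.val.map (algebraMap F₂ F₈)) *ᵥ v)
        ((actHom g).map_ne_zero_iff.2 hv) :=
  rfl

theorem mk_mem_orbit_mk_iff {v w : Fin 3 → F₈} (hv : v ≠ 0) (hw : w ≠ 0) :
    Projectivization.mk F₈ v hv ∈ MulAction.orbit (GL (Fin 3) F₂) (Projectivization.mk F₈ w hw) ↔
      finrank F₂ (span F₂ (range v)) = finrank F₂ (span F₂ (range w)) := by
  constructor
  · rintro ⟨g, hg⟩
    obtain ⟨c, hc⟩ := (Projectivization.mk_eq_mk_iff _ _ _ _ _).1 ((smul_mk g w hw).symm.trans hg)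
    rw [← finrank_units_smul c, ← span_range_units_smul, hc,
      ← exists_GL_map_mulVec_eq_iff.1 ⟨g, rfl⟩]
  · intro h
    obtain ⟨c, hc⟩ := exists_units_smul_eq_of_finrank_eq finrank_F₈.le h.symm
    rw [← span_range_units_smul] at hc
    obtain ⟨g, hg⟩ := exists_GL_map_mulVec_eq_iff.2 hc
    refine ⟨g, (smul_mk g w hw).trans ((Projectivization.mk_eq_mk_iff _ _ _ _ _).2 ⟨c⁻¹, ?_⟩)⟩
    rw [← hg, Matrix.mulVec_smul, inv_smul_smul]

def spanRank (p : ProjPlane) : ℕ := finrank F₂ (span F₂ (range p.rep))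

theorem spanRank_mk (v : Fin 3 → F₈) (hv : v ≠ 0) :
    spanRank (Projectivization.mk F₈ v hv) = finrank F₂ (span F₂ (range v)) :=
  (mk_mem_orbit_mk_iff _ hv).1 (by rw [Projectivization.mk_rep]; exact MulAction.mem_orbit_self _)

theorem spanRank_eq_iff (p q : ProjPlane) :
    spanRank p = spanRank q ↔ p ∈ MulAction.orbit (GL (Fin 3) F₂) q := by
  conv_rhs => rw [← p.mk_rep, ← q.mk_rep]
  exact (mk_mem_orbit_mk_iff _ _).symm

theorem range_spanRank : range spanRank = Icc 1 3 := by
  ext d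
  constructor
  · rintro ⟨p, rfl⟩
    refine ⟨one_le_finrank_iff.2 fun h => p.rep_nonzero ?_, (finrank_le _).trans_eq finrank_F₈⟩
    exact funext fun i => span_eq_bot.1 h _ ⟨i, rfl⟩
  · rintro ⟨h1, h3⟩
    let b := Module.finBasisOfFinrankEq F₂ F₈ finrank_F₈
    interval_cases d
    · refine ⟨Projectivization.mk F₈ (fun _ => 1) (Function.ne_iff.2 ⟨0, one_ne_zero⟩), ?_⟩
      rw [spanRank_mk, range_const, finrank_span_singleton one_ne_zero]
    · have hb : LinearIndependent F₂ ![b 0, b 1] := by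
        convert b.linearIndependent.comp ![0, 1] (by decide) using 1
        ext i
        fin_cases i <;> rfl
      refine ⟨Projectivization.mk F₈ ![b 0, b 1, b 1] (Function.ne_iff.2 ⟨0, b.ne_zero 0⟩), ?_⟩
      rw [spanRank_mk, show range ![b 0, b 1, b 1] = range ![b 0, b 1] by simp [Matrix.range_cons],
        finrank_span_eq_card hb, Fintype.card_fin]
    · refine ⟨Projectivization.mk F₈ b (Function.ne_iff.2 ⟨0, b.ne_zero 0⟩), ?_⟩
      rw [spanRank_mk, b.span_eq, finrank_top, finrank_F₈]

/-- The action of `GL(3, F₂)` on `ℙ²(F₈)` has exactly three orbits. -/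
theorem GL3F2_three_orbits_on_P2F8 :
    Nat.card (MulAction.orbitRel.Quotient (GL (Fin 3) F₂) ProjPlane) = 3 := by
  rw [MulAction.card_orbitRel_quotient_eq_card_range spanRank spanRank_eq_iff, range_spanRank]
  simp

end
end

section
/- Let η ∈ F₈ satisfy η³ = η + 1 (so η generates the multiplicative group F₈ˣ). Under the action of GL(3, F₂) on ℙ²(F₈), the orbits of the points [1:0:0], [1:η:0] and [1:η:η²] have cardinalities 7, 42 and 24 respectively, and every point of ℙ²(F₈) lies in exactly one of these three orbits. -/
noncomputable section

/-- A triple with nonzero first coordinate is a nonzero vector. -/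
theorem vec_ne_zero (a b c : F₈) (ha : a ≠ 0) : ![a, b, c] ≠ 0 :=
  fun h => ha (by simpa using congrFun h 0)

/-!
Orbit–stabilizer. In the `F₂`-basis `1, η, η²` of `F₈`, the condition `g • v = a • v` becomes a
system of `F₂`-linear equations on the entries of `g`, so the stabilizers of `[1:0:0]`, `[1:η:0]`
and `[1:η:η²]` can be counted among the `3 × 3` matrices over `F₂`: they have `24`, `4` and `7`
elements (the last one is `F₈ˣ` acting on `F₈ ≅ F₂³` by multiplication). The orbits thus have
`168 / 24 = 7`, `168 / 4 = 42` and `168 / 7 = 24` points; these sizes are distinct and add up to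
`73 = |ℙ²(F₈)|`, so the three orbits partition the plane.
-/

open Projectivization MulAction Matrix
open scoped Function

section OrbitCounting

variable {G X : Type*} [Group G] [MulAction G X]

theorem MulAction.card_orbit_eq_card_div_card_stabilizer [Finite G] (x : X) :
    Nat.card (orbit G x) = Nat.card G / Nat.card (stabilizer G x) := by
  rw [← (stabilizer G x).card_mul_index, index_stabilizer, Nat.card_coe_set_eq,
    Nat.mul_div_cancel_left _ Nat.card_pos]

theorem MulAction.existsUnique_mem_orbit_of_sum_card_orbit_eq [Finite X] {ι : Type*} [Fintype ι]
    (p : ι → X) (hcard : Function.Injective fun i ↦ Nat.card (orbit G (p i)))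
    (hsum : ∑ i, Nat.card (orbit G (p i)) = Nat.card X) (q : X) :
    ∃! i, q ∈ orbit G (p i) := by
  have eq_of_mem_orbit {x : X} {i j : ι} (hi : x ∈ orbit G (p i)) (hj : x ∈ orbit G (p j)) :
      i = j :=
    hcard (by simp only [← orbit_eq_iff.2 hi, ← orbit_eq_iff.2 hj])
  have hdisj : Pairwise (Disjoint on fun i ↦ orbit G (p i)) := fun i j hij ↦
    Set.disjoint_left.2 fun _ hi hj ↦ hij (eq_of_mem_orbit hi hj)
  have hcover : ⋃ i, orbit G (p i) = Set.univ := by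
    refine Set.eq_of_subset_of_ncard_le (Set.subset_univ _) ?_ (Set.toFinite _)
    rw [Set.ncard_univ, Set.ncard_iUnion_of_finite (fun _ ↦ Set.toFinite _) hdisj,
      finsum_eq_sum_of_fintype, ← hsum]
    simp only [Nat.card_coe_set_eq, le_refl]
  obtain ⟨i, hi⟩ := Set.mem_iUnion.1 (hcover ▸ Set.mem_univ q)
  exact ⟨i, hi, fun j hj ↦ eq_of_mem_orbit hj hi⟩

end OrbitCounting

theorem Matrix.GeneralLinearGroup.card_subgroup_eq_card_of_mem_iff {n K : Type*} [Fintype n]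
    [DecidableEq n] [Field K] [Fintype K] [DecidableEq K] (H : Subgroup (GL n K))
    (P : Matrix n n K → Prop) [DecidablePred P] (hP : ∀ g, g ∈ H ↔ P g) :
    Nat.card H = Fintype.card {A : Matrix n n K // A.det ≠ 0 ∧ P A} := by
  rw [← Nat.card_eq_fintype_card]
  exact Nat.card_congr
    { toFun g := ⟨g.1, g.1.det_ne_zero, (hP g).1 g.2⟩
      invFun A := ⟨mkOfDetNeZero A.1 A.2.1, (hP _).2 A.2.2⟩
      left_inv _ := Subtype.ext (Units.ext rfl)
      right_inv _ := rfl }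

theorem Matrix.mulVec_fin_three_apply {R : Type*} [NonUnitalNonAssocSemiring R]
    (M : Matrix (Fin 3) (Fin 3) R) (v : Fin 3 → R) (i : Fin 3) :
    (M *ᵥ v) i = M i 0 * v 0 + M i 1 * v 1 + M i 2 * v 2 :=
  vec3_dotProduct _ _

theorem exists_smul_eq_iff_of_apply_zero_eq_one {K : Type*} [CommSemiring K] {v w : Fin 3 → K}
    (hv : v 0 = 1) : (∃ a : K, a • v = w) ↔ w 1 = w 0 * v 1 ∧ w 2 = w 0 * v 2 := by
  constructor
  · rintro ⟨a, rfl⟩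
    simp [hv]
  · rintro ⟨h₁, h₂⟩
    exact ⟨w 0, funext fun i ↦ by fin_cases i <;> simp [hv, h₁, h₂]⟩

theorem card_GL_three_F₂ : Nat.card (GL (Fin 3) F₂) = 168 := by
  rw [Matrix.card_GL_field]
  simp [Fin.prod_univ_three, ZMod.card]

theorem card_projPlane : Nat.card ProjPlane = 73 := by
  simp [card_of_finrank F₈ _ (Module.finrank_fin_fun F₈), GaloisField.card 2 3 (by norm_num),
    Finset.sum_range_succ]

-- `X³ + X + 1` is irreducible over `F₂`, so no nonzero polynomial of degree `≤ 2` vanishes at `η`.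
theorem eq_zero_of_add_mul_add_mul_sq_eq_zero {K : Type*} [Field K] [Algebra F₂ K] {η : K}
    (hη : η ^ 3 = η + 1) {a b c : F₂}
    (h : algebraMap F₂ K a + algebraMap F₂ K b * η + algebraMap F₂ K c * η ^ 2 = 0) :
    a = 0 ∧ b = 0 ∧ c = 0 := by
  have : CharP K 2 := charP_of_injective_algebraMap (algebraMap F₂ K).injective 2
  have hF₂ : ∀ x : F₂, x = 0 ∨ x = 1 := by decide
  rcases hF₂ a with rfl | rfl <;> rcases hF₂ b with rfl | rfl <;> rcases hF₂ c with rfl | rfl <;>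
    simp only [map_zero, map_one, zero_mul, one_mul, zero_add, add_zero] at h <;> grind

theorem eq_of_add_mul_add_mul_sq_eq {K : Type*} [Field K] [Algebra F₂ K] {η : K}
    (hη : η ^ 3 = η + 1) {a b c a' b' c' : F₂}
    (h : algebraMap F₂ K a + algebraMap F₂ K b * η + algebraMap F₂ K c * η ^ 2 =
      algebraMap F₂ K a' + algebraMap F₂ K b' * η + algebraMap F₂ K c' * η ^ 2) :
    a = a' ∧ b = b' ∧ c = c' := by
  simp only [← sub_eq_zero (a := a), ← sub_eq_zero (a := b), ← sub_eq_zero (a := c)]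
  exact eq_zero_of_add_mul_add_mul_sq_eq_zero hη (by simp only [map_sub]; linear_combination h)

theorem mem_stabilizer_mk_iff (g : GL (Fin 3) F₂) {v : Fin 3 → F₈} (hv : v ≠ 0) :
    g ∈ stabilizer (GL (Fin 3) F₂) (mk F₈ v hv) ↔
      ∃ a : F₈, a • v = g.val.map (algebraMap F₂ F₈) *ᵥ v := by
  rw [mem_stabilizer_iff]
  show (mk F₈ v hv).map (actHom g).toLinearMap (actHom g).injective = _ ↔ _
  rw [map_mk]
  exact mk_eq_mk_iff' F₈ _ _ _ hv

section Stabilizers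

variable {η : F₈} (hη : η ^ 3 = η + 1) (g : GL (Fin 3) F₂)

theorem mem_stabilizer_mk_one_zero_zero_iff :
    g ∈ stabilizer (GL (Fin 3) F₂) (mk F₈ ![1, 0, 0] (vec_ne_zero 1 0 0 one_ne_zero)) ↔
      g.val 1 0 = 0 ∧ g.val 2 0 = 0 := by
  rw [mem_stabilizer_mk_iff, exists_smul_eq_iff_of_apply_zero_eq_one rfl]
  simp [mulVec_fin_three_apply]

include hη

theorem mem_stabilizer_mk_one_eta_zero_iff :
    g ∈ stabilizer (GL (Fin 3) F₂) (mk F₈ ![1, η, 0] (vec_ne_zero 1 η 0 one_ne_zero)) ↔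
      g.val 1 0 = 0 ∧ g.val 2 0 = 0 ∧ g.val 2 1 = 0 ∧ g.val 0 1 = 0 ∧ g.val 1 1 = g.val 0 0 := by
  rw [mem_stabilizer_mk_iff, exists_smul_eq_iff_of_apply_zero_eq_one rfl]
  simp only [mulVec_fin_three_apply, map_apply, Fin.isValue, cons_val_zero, cons_val_one, cons_val,
    mul_one, mul_zero, add_zero]
  constructor
  · rintro ⟨h₁, h₂⟩
    obtain ⟨h₁₀, h₁₁, h₀₁⟩ := eq_of_add_mul_add_mul_sq_eq (a := g.val 1 0) (b := g.val 1 1)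
      (c := 0) (a' := 0) (b' := g.val 0 0) (c' := g.val 0 1) hη
      (by simp only [map_zero]; linear_combination h₁)
    obtain ⟨h₂₀, h₂₁, -⟩ := eq_of_add_mul_add_mul_sq_eq (a := g.val 2 0) (b := g.val 2 1)
      (c := 0) (a' := 0) (b' := 0) (c' := 0) hη
      (by simp only [map_zero]; linear_combination h₂)
    exact ⟨h₁₀, h₂₀, h₂₁, h₀₁.symm, h₁₁⟩
  · rintro ⟨h₁₀, h₂₀, h₂₁, h₀₁, h₁₁⟩
    simp only [h₁₀, h₂₀, h₂₁, h₀₁, h₁₁, map_zero]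
    constructor <;> ring

theorem mem_stabilizer_mk_one_eta_eta_sq_iff :
    g ∈ stabilizer (GL (Fin 3) F₂) (mk F₈ ![1, η, η ^ 2] (vec_ne_zero 1 η (η ^ 2) one_ne_zero)) ↔
      g.val 1 0 = g.val 0 2 ∧ g.val 1 1 = g.val 0 0 + g.val 0 2 ∧ g.val 1 2 = g.val 0 1 ∧
        g.val 2 0 = g.val 0 1 ∧ g.val 2 1 = g.val 0 1 + g.val 0 2 ∧
        g.val 2 2 = g.val 0 0 + g.val 0 2 := by
  rw [mem_stabilizer_mk_iff, exists_smul_eq_iff_of_apply_zero_eq_one rfl]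
  simp only [mulVec_fin_three_apply, map_apply, Fin.isValue, cons_val_zero, cons_val_one, cons_val,
    mul_one]
  set f := algebraMap F₂ F₈
  constructor
  · rintro ⟨h₁, h₂⟩
    obtain ⟨h₁₀, h₁₁, h₁₂⟩ := eq_of_add_mul_add_mul_sq_eq (a := g.val 1 0) (b := g.val 1 1)
      (c := g.val 1 2) (a' := g.val 0 2) (b' := g.val 0 0 + g.val 0 2) (c' := g.val 0 1) hη
      (by simp only [map_add]; linear_combination h₁ + f (g.val 0 2) * hη)
    obtain ⟨h₂₀, h₂₁, h₂₂⟩ := eq_of_add_mul_add_mul_sq_eq (a := g.val 2 0) (b := g.val 2 1)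
      (c := g.val 2 2) (a' := g.val 0 1) (b' := g.val 0 1 + g.val 0 2)
      (c' := g.val 0 0 + g.val 0 2) hη
      (by simp only [map_add]; linear_combination h₂ + (f (g.val 0 1) + f (g.val 0 2) * η) * hη)
    exact ⟨h₁₀, h₁₁, h₁₂, h₂₀, h₂₁, h₂₂⟩
  · rintro ⟨h₁₀, h₁₁, h₁₂, h₂₀, h₂₁, h₂₂⟩
    simp only [h₁₀, h₁₁, h₁₂, h₂₀, h₂₁, h₂₂, map_add]
    exact ⟨by linear_combination -f (g.val 0 2) * hη,
      by linear_combination -(f (g.val 0 1) + f (g.val 0 2) * η) * hη⟩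

end Stabilizers

theorem card_stabilizer_mk_one_zero_zero :
    Nat.card (stabilizer (GL (Fin 3) F₂)
      (mk F₈ ![1, 0, 0] (vec_ne_zero 1 0 0 one_ne_zero))) = 24 := by
  rw [GeneralLinearGroup.card_subgroup_eq_card_of_mem_iff _
    (fun A ↦ A 1 0 = 0 ∧ A 2 0 = 0) mem_stabilizer_mk_one_zero_zero_iff]
  decide

theorem card_stabilizer_mk_one_eta_zero {η : F₈} (hη : η ^ 3 = η + 1) :
    Nat.card (stabilizer (GL (Fin 3) F₂)
      (mk F₈ ![1, η, 0] (vec_ne_zero 1 η 0 one_ne_zero))) = 4 := by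
  rw [GeneralLinearGroup.card_subgroup_eq_card_of_mem_iff _
    (fun A ↦ A 1 0 = 0 ∧ A 2 0 = 0 ∧ A 2 1 = 0 ∧ A 0 1 = 0 ∧ A 1 1 = A 0 0)
    (mem_stabilizer_mk_one_eta_zero_iff hη)]
  decide

theorem card_stabilizer_mk_one_eta_eta_sq {η : F₈} (hη : η ^ 3 = η + 1) :
    Nat.card (stabilizer (GL (Fin 3) F₂)
      (mk F₈ ![1, η, η ^ 2] (vec_ne_zero 1 η (η ^ 2) one_ne_zero))) = 7 := by
  rw [GeneralLinearGroup.card_subgroup_eq_card_of_mem_iff _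
    (fun A ↦ A 1 0 = A 0 2 ∧ A 1 1 = A 0 0 + A 0 2 ∧ A 1 2 = A 0 1 ∧ A 2 0 = A 0 1 ∧
      A 2 1 = A 0 1 + A 0 2 ∧ A 2 2 = A 0 0 + A 0 2)
    (mem_stabilizer_mk_one_eta_eta_sq_iff hη)]
  decide

/-- The orbits of `[1:0:0]`, `[1:η:0]`, `[1:η:η²]` under `GL(3,F₂)` acting on `ℙ²(F₈)`
have sizes `7`, `42`, `24`, and every point of `ℙ²(F₈)` lies in exactly one of them. -/
theorem GL3F2_orbit_sizes_on_P2F8 (η : F₈) (hη : η ^ 3 = η + 1)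
    (p₁ p₂ p₃ : ProjPlane)
    (hp₁ : p₁ = Projectivization.mk F₈ ![1, 0, 0] (vec_ne_zero 1 0 0 one_ne_zero))
    (hp₂ : p₂ = Projectivization.mk F₈ ![1, η, 0] (vec_ne_zero 1 η 0 one_ne_zero))
    (hp₃ : p₃ = Projectivization.mk F₈ ![1, η, η ^ 2] (vec_ne_zero 1 η (η ^ 2) one_ne_zero)) :
    Nat.card (MulAction.orbit (GL (Fin 3) F₂) p₁) = 7 ∧
    Nat.card (MulAction.orbit (GL (Fin 3) F₂) p₂) = 42 ∧
    Nat.card (MulAction.orbit (GL (Fin 3) F₂) p₃) = 24 ∧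
    ∀ q : ProjPlane, ∃! i : Fin 3,
      q ∈ MulAction.orbit (GL (Fin 3) F₂) (![p₁, p₂, p₃] i) := by
  have h₁ : Nat.card (orbit (GL (Fin 3) F₂) p₁) = 7 := by
    rw [hp₁, card_orbit_eq_card_div_card_stabilizer, card_GL_three_F₂,
      card_stabilizer_mk_one_zero_zero]
  have h₂ : Nat.card (orbit (GL (Fin 3) F₂) p₂) = 42 := by
    rw [hp₂, card_orbit_eq_card_div_card_stabilizer, card_GL_three_F₂,
      card_stabilizer_mk_one_eta_zero hη]
  have h₃ : Nat.card (orbit (GL (Fin 3) F₂) p₃) = 24 := by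
    rw [hp₃, card_orbit_eq_card_div_card_stabilizer, card_GL_three_F₂,
      card_stabilizer_mk_one_eta_eta_sq hη]
  have hcard : (fun i ↦ Nat.card (orbit (GL (Fin 3) F₂) (![p₁, p₂, p₃] i))) = ![7, 42, 24] := by
    ext i
    fin_cases i <;> assumption
  refine ⟨h₁, h₂, h₃, existsUnique_mem_orbit_of_sum_card_orbit_eq _
    (by rw [hcard]; decide) ?_⟩
  rw [hcard, card_projPlane]
  rfl

end
end

section
/- Let η ∈ F₈ satisfy η³ = η + 1. The stabilizer in GL(3, F₂) of the point [1:η:η²] ∈ ℙ²(F₈) (under the action via the entrywise inclusion F₂ ↪ F₈) is cyclic of order 7. -/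
noncomputable section

private lemma two_eq_zero' : (2 : F₈) = 0 := by
  have : (2 : F₈) = ((2 : ℕ) : F₈) := by norm_cast
  rw [this, CharP.cast_eq_zero F₈ 2]

private lemma zmod2_cases : ∀ x : F₂, x = 0 ∨ x = 1 := by decide

private lemma indep (η : F₈) (hη : η ^ 3 = η + 1) (hη0 : η ≠ 0) (hη1 : η ≠ 1)
    (a b c : F₂)
    (h : algebraMap F₂ F₈ a + algebraMap F₂ F₈ b * η + algebraMap F₂ F₈ c * η ^ 2 = 0) :
    a = 0 ∧ b = 0 ∧ c = 0 := by
  have h2 : (2 : F₈) = 0 := two_eq_zero'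
  rcases zmod2_cases a with rfl | rfl <;> rcases zmod2_cases b with rfl | rfl <;>
      rcases zmod2_cases c with rfl | rfl <;>
      simp only [map_zero, map_one, zero_add, add_zero, zero_mul, one_mul] at h ⊢
  · exact ⟨trivial, trivial, trivial⟩
  · -- c = 1 : η^2 = 0
    exact absurd (pow_eq_zero_iff two_ne_zero |>.mp h) hη0
  · -- b = 1 : η = 0
    exact absurd h hη0
  · -- b = c = 1 : η + η^2 = 0
    have hm : η * (η + 1) = 0 := by linear_combination h
    rcases mul_eq_zero.mp hm with h' | h'
    · exact absurd h' hη0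
    · exact absurd (by linear_combination h' - h2) hη1
  · -- a = 1 : 1 = 0
    exact absurd h one_ne_zero
  · -- a = c = 1 : 1 + η^2 = 0
    have hm : (η - 1) ^ 2 = 0 := by linear_combination h - η * h2
    exact absurd (sub_eq_zero.mp (pow_eq_zero_iff two_ne_zero |>.mp hm)) hη1
  · -- a = b = 1 : 1 + η = 0
    exact absurd (by linear_combination h - h2) hη1
  · -- a = b = c = 1
    exact absurd (by linear_combination (η + 1) * h - hη - (η ^ 2 + η + 1) * h2) hη0

private lemma actHom_apply (g : GL (Fin 3) F₂) (w : Fin 3 → F₈) :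
    actHom g w = (g.val.map (algebraMap F₂ F₈)).mulVec w := rfl

private def M₀ : Matrix (Fin 3) (Fin 3) F₂ := !![0,1,0;0,0,1;1,1,0]
private def N₀ : Matrix (Fin 3) (Fin 3) F₂ := !![1,0,1;1,0,0;0,1,0]

private def Mgl : GL (Fin 3) F₂ := ⟨M₀, N₀, by decide, by decide⟩
private lemma zmod2_add_one (x : F₂) (h : x + 1 = 0) : x = 1 := by
  rcases zmod2_cases x with rfl | rfl
  · exact absurd h (by decide)
  · rfl
/-- The stabilizer in `GL(3,F₂)` of the point `[1:η:η²] ∈ ℙ²(F₈)` is cyclic of order `7`. -/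
theorem GL3F2_stabilizer_of_1_eta_eta2_is_cyclic_of_order_7
    (η : F₈) (hη : η ^ 3 = η + 1)
    (p : ProjPlane)
    (hp : p = Projectivization.mk F₈ ![1, η, η ^ 2] (vec_ne_zero 1 η (η ^ 2) one_ne_zero)) :
    IsCyclic (MulAction.stabilizer (GL (Fin 3) F₂) p) ∧
    Nat.card (MulAction.stabilizer (GL (Fin 3) F₂) p) = 7 := by
  have h2 : (2 : F₈) = 0 := two_eq_zero'
  have hη0 : η ≠ 0 := by
    intro h; rw [h] at hη; simp at hη
  have hη1 : η ≠ 1 := by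
    intro h; rw [h, one_pow] at hη
    exact one_ne_zero (by linear_combination hη + h2)
  subst hp
  set w : Fin 3 → F₈ := ![1, η, η ^ 2] with hwdef
  have hv : w ≠ 0 := vec_ne_zero 1 η (η ^ 2) one_ne_zero
  set S := MulAction.stabilizer (GL (Fin 3) F₂)
    (Projectivization.mk F₈ w (vec_ne_zero 1 η (η ^ 2) one_ne_zero)) with hSdef
  have key : ∀ g : GL (Fin 3) F₂,
      g ∈ S ↔ ∃ a : F₈ˣ, a • w = actHom g w := by
    intro g
    rw [hSdef, MulAction.mem_stabilizer_iff]
    show Projectivization.map (actHom g).toLinearMap (actHom g).injective _ = _ ↔ _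
    rw [Projectivization.map_mk, Projectivization.mk_eq_mk_iff]
    rfl
  have hex : ∀ g : S, ∃ a : F₈ˣ, a • w = actHom g.val w := fun g => (key g.val).mp g.2
  have uniq : ∀ (a b : F₈ˣ), a • w = b • w → a = b := by
    intro a b hab
    have h0 := congrFun hab 0
    simp [hwdef, Units.smul_def] at h0
    exact Units.ext h0
  set f : S → F₈ˣ := fun g => (hex g).choose with hfdef
  have hf : ∀ g : S, (f g) • w = actHom g.val w := fun g => (hex g).choose_spec
  have hcomm : ∀ (a b : F₈ˣ) (u : Fin 3 → F₈), a • b • u = b • a • u := by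
    intro a b u
    rw [smul_smul, smul_smul, mul_comm]
  let φ : S →* F₈ˣ :=
    { toFun := f
      map_one' := by
        refine uniq _ _ ?_
        rw [hf 1, one_smul]
        show actHom 1 w = w
        rw [map_one]; rfl
      map_mul' := by
        intro g h
        refine uniq _ _ ?_
        show f (g * h) • w = (f g * f h) • w
        calc f (g * h) • w = actHom ((g * h) : S).val w := hf _
          _ = actHom g.val (actHom h.val w) := by rw [Subgroup.coe_mul, map_mul]; rfl
          _ = actHom g.val ((f h : F₈) • w) := congrArg _ (hf h).symm
          _ = (f h : F₈) • actHom g.val w := map_smul _ _ _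
          _ = (f h : F₈) • ((f g : F₈) • w) := congrArg _ (hf g).symm
          _ = (f g * f h) • w := by rw [smul_smul, mul_comm (f h : F₈)]; rfl }
  have hφ : ∀ g : S, φ g • w = actHom g.val w := hf
  -- injectivity
  have hinj : Function.Injective φ := by
    rw [injective_iff_map_eq_one]
    intro g hg
    have hmv : (g.val.val.map (algebraMap F₂ F₈)).mulVec w = w := by
      rw [← actHom_apply, ← hφ g, hg, one_smul]
    have e0 := congrFun hmv 0
    have e1 := congrFun hmv 1
    have e2 := congrFun hmv 2
    simp only [Matrix.mulVec, dotProduct, Fin.sum_univ_three, Matrix.map_apply,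
      hwdef, Matrix.cons_val_zero, Matrix.cons_val_one, Matrix.head_cons,
      Matrix.cons_val_two, Matrix.tail_cons] at e0 e1 e2
    obtain ⟨ha0, hb0, hc0⟩ := indep η hη hη0 hη1 (g.val.val 0 0 + 1) (g.val.val 0 1)
      (g.val.val 0 2) (by rw [map_add, map_one]; linear_combination e0 + h2)
    obtain ⟨ha1, hb1, hc1⟩ := indep η hη hη0 hη1 (g.val.val 1 0) (g.val.val 1 1 + 1)
      (g.val.val 1 2) (by rw [map_add, map_one]; linear_combination e1 + η * h2)
    obtain ⟨ha2, hb2, hc2⟩ := indep η hη hη0 hη1 (g.val.val 2 0) (g.val.val 2 1)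
      (g.val.val 2 2 + 1) (by rw [map_add, map_one]; linear_combination e2 + η ^ 2 * h2)
    have e00 : g.val.val 0 0 = 1 := zmod2_add_one _ ha0
    have e11 : g.val.val 1 1 = 1 := zmod2_add_one _ hb1
    have e22 : g.val.val 2 2 = 1 := zmod2_add_one _ hc2
    have : g.val.val = 1 := by
      ext i j
      fin_cases i <;> fin_cases j <;>
        simp [e00, e11, e22, hb0, hc0, ha1, hc1, ha2, hb2, Matrix.one_apply]
    exact Subtype.ext (Units.ext this)
  -- the order-7 element
  have hMact : (Units.mk0 η hη0) • w = actHom Mgl w := by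
    funext i
    rw [actHom_apply]
    fin_cases i <;>
      simp [Mgl, M₀, Matrix.mulVec, dotProduct, Fin.sum_univ_three, Matrix.map_apply,
        hwdef, Units.smul_def]
    · ring
    · linear_combination hη
  have hMgl : Mgl ∈ S := (key Mgl).mpr ⟨Units.mk0 η hη0, hMact⟩
  set m : S := ⟨Mgl, hMgl⟩ with hmdef
  have hφm : φ m = Units.mk0 η hη0 := uniq _ _ (by rw [hφ m]; exact hMact.symm)
  have hc7 : Nat.card F₈ˣ = 7 := by
    rw [Nat.card_units, GaloisField.card 2 3 (by norm_num)]
    norm_num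
  haveI : Fact (Nat.Prime 7) := ⟨by norm_num⟩
  have hord : orderOf (Units.mk0 η hη0) = 7 := by
    apply orderOf_eq_prime
    · rw [← hc7]; exact pow_card_eq_one'
    · intro h
      exact hη1 (by simpa [Units.ext_iff] using h)
  have hdvd : (7 : ℕ) ∣ Nat.card S := by
    rw [← hord, ← hφm]
    exact dvd_trans (orderOf_map_dvd φ m) (orderOf_dvd_natCard m)
  have hle : Nat.card S ≤ 7 := hc7 ▸ Nat.card_le_card_of_injective φ hinj
  have hcard : Nat.card S = 7 :=
    le_antisymm hle (Nat.le_of_dvd Nat.card_pos hdvd)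
  exact ⟨isCyclic_of_prime_card hcard, hcard⟩
end
end

section
/- Let G be a finite group with a normal subgroup E that is elementary abelian of order 8 (every nonidentity element of E has order 2 and |E| = 8), and let g ∈ G be an element of order 7 such that conjugation by g fixes no nonidentity element of E. Then for every injective group homomorphism ρ from the subgroup generated by E and g into the general linear group of a finite-dimensional complex vector space V, there exists a nonzero vector v ∈ V with ρ(g) v = v. -/
/-! Let `P` be the averaging projection onto the `E`-invariants and `Q = 1 - P`; faithfulness
gives `tr Q = dim V - dim V^E ≠ 0`. For `1 ≠ c ∈ ⟨g⟩`, the map `m ↦ c⁻¹ m c m⁻¹` on `E` is injective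
because `c` centralises no nontrivial element of `E`, so every element of the coset `cE` is
conjugate to `c`; hence `tr (ρ c * P) = tr (ρ c)`, i.e. `tr (ρ c * Q) = 0`. Averaging over `⟨g⟩`
then gives `tr (P_⟨g⟩ * Q) = tr Q / 7 ≠ 0`, and a nonzero vector in the image of `P_⟨g⟩ * Q` is
fixed by `g`. -/

open LinearMap Subgroup

theorem Subgroup.exists_conj_eq_mul_of_forall_commute {G : Type*} [Group G] {N : Subgroup G}
    [N.Normal] [Finite N] {x : G} (hx : ∀ n ∈ N, x * n = n * x → n = 1) {n : G} (hn : n ∈ N) :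
    ∃ m ∈ N, m * x * m⁻¹ = x * n := by
  let f : N → N := fun m => ⟨x⁻¹ * ((m : G) * x * (m : G)⁻¹),
    by simpa [mul_assoc] using mul_mem (‹N.Normal›.conj_mem _ m.2 x⁻¹) (inv_mem m.2)⟩
  have hf : Function.Injective f := by
    intro m m' hmm'
    have h : (m : G) * x * (m : G)⁻¹ = m' * x * (m' : G)⁻¹ :=
      mul_left_cancel (congrArg Subtype.val hmm')
    have key := hx _ (mul_mem (inv_mem m'.2) m.2) (by
      calc x * ((m' : G)⁻¹ * m) = (m' : G)⁻¹ * (m' * x * (m' : G)⁻¹) * m := by group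
        _ = (m' : G)⁻¹ * (m * x * (m : G)⁻¹) * m := by rw [h]
        _ = (m' : G)⁻¹ * m * x := by group)
    exact Subtype.ext (inv_mul_eq_one.mp key).symm
  obtain ⟨m, hm⟩ := (Finite.injective_iff_surjective.mp hf) ⟨n, hn⟩
  refine ⟨m, m.2, ?_⟩
  have hm : x⁻¹ * ((m : G) * x * (m : G)⁻¹) = n := congrArg Subtype.val hm
  rw [← hm]
  group

theorem Subgroup.zpowers_eq_zpowers_of_prime_orderOf {G : Type*} [Group G] [Finite G] {g c : G}
    (hg : (orderOf g).Prime) (hc : c ∈ zpowers g) (hc1 : c ≠ 1) : zpowers c = zpowers g := by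
  have hcg : orderOf c = orderOf g :=
    (hg.eq_one_or_self_of_dvd _ (orderOf_dvd_of_mem_zpowers hc)).resolve_left
      (by rwa [orderOf_eq_one_iff])
  exact eq_of_le_of_card_ge (zpowers_le.mpr hc) (by rw [Nat.card_zpowers, Nat.card_zpowers, hcg])

theorem Subgroup.forall_mem_zpowers_commute_eq_one_of_prime_orderOf {G : Type*} [Group G]
    [Finite G] {g : G} (hg : (orderOf g).Prime) {N : Subgroup G}
    (hgN : ∀ n ∈ N, g * n = n * g → n = 1) :
    ∀ c ∈ zpowers g, c ≠ 1 → ∀ n ∈ N, c * n = n * c → n = 1 := by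
  intro c hc hc1 n hn hcn
  obtain ⟨k, hk⟩ := mem_zpowers_iff.mp
    ((zpowers_eq_zpowers_of_prime_orderOf hg hc hc1).ge (mem_zpowers g))
  exact hgN n hn (hk ▸ (Commute.zpow_left hcn k).eq)

namespace Representation

variable {k G V : Type*} [Field k] [Group G] [AddCommGroup V] [Module k V]

theorem trace_mul_averageMap_eq_character (ρ : Representation k G V) {N : Subgroup G}
    [Fintype N] [Invertible (Fintype.card N : k)] {x : G}
    (hx : ∀ n ∈ N, ∃ m : G, m * x * m⁻¹ = x * n) :
    trace k V (ρ x * averageMap (ρ.comp N.subtype)) = ρ.character x := by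
  have hconj (n : N) : trace k V (ρ x * ρ n) = ρ.character x := by
    obtain ⟨m, hm⟩ := hx n n.2
    rw [← map_mul, ← hm]
    exact ρ.char_conj x m
  simp only [averageMap, GroupAlgebra.average, invOf_eq_inv, MonoidAlgebra.of_apply, map_smul,
    map_sum, asAlgebraHom_single, MonoidHom.coe_comp, coe_subtype, Function.comp_apply, one_smul,
    Algebra.mul_smul_comm, Finset.mul_sum, hconj, Finset.sum_const, Finset.card_univ,
    nsmul_eq_mul, smul_eq_mul]
  exact inv_mul_cancel_left₀ (Invertible.ne_zero _) _

theorem invariants_comp_subtype_ne_bot [CharZero k] [FiniteDimensional k V]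
    (ρ : Representation k G V)
    {N C : Subgroup G} [N.Normal] [Finite N] [Finite C] (hN : ∃ n ∈ N, ρ n ≠ 1)
    (hC : ∀ c ∈ C, c ≠ 1 → ∀ n ∈ N, c * n = n * c → n = 1) :
    invariants (ρ.comp C.subtype) ≠ ⊥ := by
  have := Fintype.ofFinite N
  have := Fintype.ofFinite C
  have := invertibleOfNonzero (Nat.cast_ne_zero.mpr (Fintype.card_ne_zero (α := N)) : (_ : k) ≠ 0)
  have := invertibleOfNonzero (Nat.cast_ne_zero.mpr (Fintype.card_ne_zero (α := C)) : (_ : k) ≠ 0)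
  set Q := 1 - averageMap (ρ.comp N.subtype)
  have hQ : trace k V Q ≠ 0 := by
    have hNtop : invariants (ρ.comp N.subtype) ≠ ⊤ := by
      obtain ⟨n, hn, hρn⟩ := hN
      refine fun htop => hρn (LinearMap.ext fun v => ?_)
      exact (htop ▸ Submodule.mem_top : v ∈ invariants (ρ.comp N.subtype)) ⟨n, hn⟩
    rw [map_sub, trace_one, (isProj_averageMap _).trace, sub_ne_zero, Ne, Nat.cast_inj]
    exact fun h => hNtop (Submodule.eq_top_of_finrank_eq h.symm)
  have hcQ (c : C) (hc : c ≠ 1) : trace k V (ρ c * Q) = 0 := by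
    have hconj (n : G) (hn : n ∈ N) : ∃ m : G, m * c * m⁻¹ = c * n :=
      (exists_conj_eq_mul_of_forall_commute (hC c c.2 (by exact_mod_cast hc)) hn).imp
        fun _ hm => hm.2
    rw [mul_sub, mul_one, map_sub, trace_mul_averageMap_eq_character ρ hconj, character, sub_self]
  have hA : trace k V (averageMap (ρ.comp C.subtype) * Q) ≠ 0 := by
    simp only [averageMap, GroupAlgebra.average, invOf_eq_inv, MonoidAlgebra.of_apply, map_smul,
      map_sum, asAlgebraHom_single, MonoidHom.coe_comp, coe_subtype, Function.comp_apply,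
      one_smul, Algebra.smul_mul_assoc, Finset.sum_mul, smul_eq_mul]
    rw [Finset.sum_eq_single 1 (fun c _ hc => hcQ c hc) (by simp), OneMemClass.coe_one, map_one,
      one_mul]
    exact mul_ne_zero (inv_ne_zero (Nat.cast_ne_zero.mpr Fintype.card_ne_zero)) hQ
  obtain ⟨u, hu⟩ : ∃ u, (averageMap (ρ.comp C.subtype) * Q) u ≠ 0 := by
    by_contra! h
    exact hA (by rw [show averageMap (ρ.comp C.subtype) * Q = 0 from LinearMap.ext h, map_zero])
  exact (Submodule.ne_bot_iff _).mpr ⟨_, averageMap_invariant _ (Q u), hu⟩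

end Representation

theorem frobenius_2_3_7_has_fixed_vector_general
    (G : Type) [Group G] [Finite G] (E : Subgroup G) [E.Normal]
    (hE_card : Nat.card E = 8)
    (g : G) (hg : orderOf g = 7)
    (hfree : ∀ x ∈ E, x ≠ 1 → g * x * g⁻¹ ≠ x)
    (V : Type) [AddCommGroup V] [Module ℂ V] [FiniteDimensional ℂ V]
    (ρ : ↥(E ⊔ Subgroup.zpowers g) →* (V →ₗ[ℂ] V)ˣ)
    (hρ : Function.Injective ρ) :
    ∃ v : V, v ≠ 0 ∧
      (ρ ⟨g, le_sup_right (α := Subgroup G) (Subgroup.mem_zpowers g)⟩ : V →ₗ[ℂ] V) v = v := by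
  set g' : ↥(E ⊔ zpowers g) := ⟨g, le_sup_right (α := Subgroup G) (mem_zpowers g)⟩
  have hN : ∃ n ∈ E.subgroupOf (E ⊔ zpowers g), ((Units.coeHom _).comp ρ) n ≠ 1 := by
    have : Nontrivial E := Finite.one_lt_card_iff_nontrivial.mp (by omega)
    obtain ⟨e, he, he1⟩ := E.exists_ne_one_of_nontrivial
    refine ⟨⟨e, mem_sup_left he⟩, he, fun h => he1 ?_⟩
    exact congrArg Subtype.val ((injective_iff_map_eq_one ρ).mp hρ _ (Units.val_eq_one.mp h))
  have hg' : (orderOf g').Prime := by rw [Subgroup.orderOf_mk, hg]; norm_num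
  have hg'N : ∀ n ∈ E.subgroupOf (E ⊔ zpowers g), g' * n = n * g' → n = 1 := by
    intro n hn hgn
    by_contra hn1
    exact hfree n hn (by exact_mod_cast hn1) (mul_inv_eq_iff_eq_mul.mpr (congrArg Subtype.val hgn))
  obtain ⟨v, hv, hv0⟩ := (Submodule.ne_bot_iff _).mp
    (Representation.invariants_comp_subtype_ne_bot ((Units.coeHom _).comp ρ) hN
      (forall_mem_zpowers_commute_eq_one_of_prime_orderOf hg' hg'N))
  exact ⟨v, hv0, hv ⟨g', mem_zpowers g'⟩⟩

/-- If `G` is a finite group with a normal elementary abelian subgroup `E` of order `8`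
and `g ∈ G` has order `7` and acts on `E` by conjugation fixing no nonidentity element,
then in every faithful finite-dimensional complex representation of `⟨E, g⟩` the element
`g` fixes a nonzero vector. -/
theorem frobenius_2_3_7_has_fixed_vector
    (G : Type) [Group G] [Finite G] (E : Subgroup G) [E.Normal]
    (hE_card : Nat.card E = 8)
    (hE_sq : ∀ x ∈ E, x ^ 2 = 1)
    (hE_ab : ∀ x ∈ E, ∀ y ∈ E, x * y = y * x)
    (g : G) (hg : orderOf g = 7)
    (hfree : ∀ x ∈ E, x ≠ 1 → g * x * g⁻¹ ≠ x)
    (V : Type) [AddCommGroup V] [Module ℂ V] [FiniteDimensional ℂ V]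
    (ρ : ↥(E ⊔ Subgroup.zpowers g) →* (V →ₗ[ℂ] V)ˣ)
    (hρ : Function.Injective ρ) :
    ∃ v : V, v ≠ 0 ∧
      (ρ ⟨g, le_sup_right (α := Subgroup G) (Subgroup.mem_zpowers g)⟩ : V →ₗ[ℂ] V) v = v :=
  frobenius_2_3_7_has_fixed_vector_general G E hE_card g hg hfree V ρ hρ
end

section
/- Let V be a nonzero finite-dimensional vector space over F₂ = ZMod 2 equipped with a linear action of the cyclic group C₇ of order 7, and suppose no nonzero vector of V is fixed by every element of C₇. Then 3 divides the dimension of V over F₂, and V contains a 3-dimensional C₇-invariant subspace. -/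
lemma two_pow_mod7 : ∀ n : ℕ, 2 ^ n % 7 = 1 → 3 ∣ n := by
  intro n
  induction n using Nat.strong_induction_on with
  | _ n ih =>
    intro h
    match n with
    | 0 => exact Dvd.intro 0 rfl
    | 1 => simp at h
    | 2 => simp at h
    | (m+3) =>
      have h8 : 2 ^ (m + 3) % 7 = 2 ^ m % 7 := by
        rw [pow_add, Nat.mul_mod]
        norm_num
      have := ih m (by omega) (by omega)
      omega

lemma span3 (V : Type) [AddCommGroup V] [Module (ZMod 2) V]
    (g : V →ₗ[ZMod 2] V)
    (hfix1 : ∀ w : V, g w = w → w = 0)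
    (ginj : ∀ w : V, g w = 0 → w = 0)
    (v : V) (hv : v ≠ 0)
    (hrel : g (g (g v)) = g v + v ∨ g (g (g v)) = g (g v) + v) :
    Module.finrank (ZMod 2) (Submodule.span (ZMod 2) (Set.range ![v, g v, g (g v)])) = 3 ∧
    ∀ w ∈ Submodule.span (ZMod 2) (Set.range ![v, g v, g (g v)]),
      g w ∈ Submodule.span (ZMod 2) (Set.range ![v, g v, g (g v)]) := by
  have hneg : ∀ x : V, -x = x := by
    intro x
    have h1 : (-1 : ZMod 2) = 1 := by decide
    rw [← neg_one_smul (ZMod 2) x, h1, one_smul]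
  have hadd : ∀ a b : V, a + b = 0 → a = b := by
    intro a b h
    have := eq_neg_of_add_eq_zero_left h
    rwa [hneg] at this
  have hxx : ∀ x : V, x + x = 0 := by
    intro x
    nth_rewrite 2 [← hneg x]
    exact add_neg_cancel x
  set W := Submodule.span (ZMod 2) (Set.range ![v, g v, g (g v)]) with hW
  have hvW : v ∈ W := Submodule.subset_span ⟨0, rfl⟩
  have hgvW : g v ∈ W := Submodule.subset_span ⟨1, rfl⟩
  have hggvW : g (g v) ∈ W := Submodule.subset_span ⟨2, rfl⟩
  have hgggW : g (g (g v)) ∈ W := by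
    rcases hrel with h | h
    · rw [h]; exact W.add_mem hgvW hvW
    · rw [h]; exact W.add_mem hggvW hvW
  constructor
  · have hli : LinearIndependent (ZMod 2) ![v, g v, g (g v)] := by
      rw [Fintype.linearIndependent_iff]
      intro c hc
      have hval : ∀ x : ZMod 2, x = 0 ∨ x = 1 := by decide
      have key : c 0 • v + c 1 • g v + c 2 • g (g v) = 0 := by
        simpa [Fin.sum_univ_three] using hc
      suffices hs : c 0 = 0 ∧ c 1 = 0 ∧ c 2 = 0 by
        intro i; fin_cases i; exacts [hs.1, hs.2.1, hs.2.2]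
      rcases hval (c 0) with h0 | h0 <;> rcases hval (c 1) with h1 | h1 <;>
        rcases hval (c 2) with h2 | h2 <;>
        simp only [h0, h1, h2, zero_smul, one_smul, zero_add, add_zero] at key
      · exact ⟨h0, h1, h2⟩
      · exact absurd (ginj _ (ginj _ key)) hv
      · exact absurd (ginj _ key) hv
      · exact absurd (ginj _ (hfix1 (g v) ((hadd _ _ key).symm))) hv
      · exact absurd key hv
      · exfalso
        have h2v : v = g (g v) := hadd _ _ key
        rcases hrel with hA | hB
        · have hgv : g v = g v + v := by rw [← hA]; exact congrArg g h2v
          exact hv (left_eq_add.mp hgv)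
        · have : g (g (g v)) = 0 := by rw [hB, ← h2v, hxx]
          exact hv (ginj _ (ginj _ (ginj _ this)))
      · exact absurd (hfix1 v (hadd _ _ key).symm) hv
      · exfalso
        have h12 : v + g v = g (g v) := hadd _ _ key
        have h3 : g v + g (g v) = g (g (g v)) := by
          have := congrArg g h12
          rwa [map_add] at this
        rcases hrel with hA | hB
        · have h2v : g (g v) = v := by
            have : g v + g (g v) = g v + v := by rw [h3, hA]
            exact add_left_cancel this
          have : v + g v = v := by rw [h12, h2v]
          exact hv (ginj _ (add_eq_left.mp this))
        · have hgvv : g v = v := by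
            have : g (g v) + g v = g (g v) + v := by
              rw [add_comm (g (g v)) (g v), h3, hB]
            exact add_left_cancel this
          exact hv (hfix1 v hgvv)
    have := finrank_span_eq_card (R := ZMod 2) hli
    simpa using this
  · intro w hw
    refine Submodule.span_induction ?_ ?_ ?_ ?_ hw
    · rintro x ⟨i, rfl⟩
      fin_cases i
      · simpa using hgvW
      · simpa using hggvW
      · simpa using hgggW
    · simp
    · intro x y _ _ hx hy
      rw [map_add]; exact W.add_mem hx hy
    · intro a x _ hx
      rw [map_smul]; exact W.smul_mem a hx

/-- If the cyclic group `C₇ = ZMod 7` acts linearly on a nonzero finite-dimensional vector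
space `V` over `F₂ = ZMod 2` with no nonzero fixed vector, then `3` divides `dim V` and `V`
contains a `3`-dimensional invariant subspace. -/
theorem fixed_point_free_C7_rep_over_F2
    (V : Type) [AddCommGroup V] [Module (ZMod 2) V] [FiniteDimensional (ZMod 2) V]
    (hV : Nontrivial V)
    (ρ : Multiplicative (ZMod 7) →* (V →ₗ[ZMod 2] V)ˣ)
    (hfix : ∀ v : V, (∀ c : Multiplicative (ZMod 7), (ρ c : V →ₗ[ZMod 2] V) v = v) → v = 0) :
    3 ∣ Module.finrank (ZMod 2) V ∧
    ∃ W : Submodule (ZMod 2) V, Module.finrank (ZMod 2) W = 3 ∧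
      ∀ (c : Multiplicative (ZMod 7)), ∀ v ∈ W, (ρ c : V →ₗ[ZMod 2] V) v ∈ W := by
  -- basic char-2 facts
  have hneg : ∀ x : V, -x = x := by
    intro x
    have h1 : (-1 : ZMod 2) = 1 := by decide
    rw [← neg_one_smul (ZMod 2) x, h1, one_smul]
  have hadd : ∀ a b : V, a + b = 0 → a = b := by
    intro a b h
    have := eq_neg_of_add_eq_zero_left h
    rwa [hneg] at this
  have hxx : ∀ x : V, x + x = 0 := by
    intro x
    nth_rewrite 2 [← hneg x]
    exact add_neg_cancel x
  -- the generator
  set g : V →ₗ[ZMod 2] V := (ρ (Multiplicative.ofAdd (1 : ZMod 7)) : V →ₗ[ZMod 2] V) with hgdef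
  have hgen : ∀ c : Multiplicative (ZMod 7),
      c = (Multiplicative.ofAdd (1 : ZMod 7)) ^ (ZMod.val (Multiplicative.toAdd c)) := by
    decide
  have hpow : ∀ c : Multiplicative (ZMod 7),
      (ρ c : V →ₗ[ZMod 2] V) = g ^ (ZMod.val (Multiplicative.toAdd c)) := by
    intro c
    conv_lhs => rw [hgen c]
    rw [map_pow, Units.val_pow_eq_pow_val]
  -- g has order dividing 7
  have hg7 : ∀ w : V, g (g (g (g (g (g (g w)))))) = w := by
    intro w
    have h7 : (Multiplicative.ofAdd (1 : ZMod 7)) ^ 7 = 1 := by decide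
    have : (g ^ 7) w = w := by
      rw [← Units.val_pow_eq_pow_val, ← map_pow, h7, map_one, Units.val_one,
        Module.End.one_apply]
    simpa [pow_succ, Module.End.mul_apply] using this
  -- no nonzero fixed vector of g
  have hfix1 : ∀ w : V, g w = w → w = 0 := by
    intro w hw
    apply hfix
    intro c
    rw [hpow c]
    generalize ZMod.val (Multiplicative.toAdd c) = k
    induction k with
    | zero => simp
    | succ n ih => rw [pow_succ, Module.End.mul_apply, hw]; exact ih
  -- g is injective
  have ginj : ∀ w : V, g w = 0 → w = 0 := by
    intro w hw
    have h1 : (((ρ (Multiplicative.ofAdd (1 : ZMod 7)))⁻¹ : (V →ₗ[ZMod 2] V)ˣ) :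
        V →ₗ[ZMod 2] V) (g w) = w := by
      rw [hgdef, ← Module.End.mul_apply, ← Units.val_mul, inv_mul_cancel, Units.val_one,
        Module.End.one_apply]
    rw [hw, map_zero] at h1
    exact h1.symm
  -- the sum of the 7 translates is zero
  have hsum : ∀ w : V,
      w + g w + g (g w) + g (g (g w)) + g (g (g (g w))) + g (g (g (g (g w)))) +
        g (g (g (g (g (g w))))) = 0 := by
    intro w
    apply hfix1
    rw [map_add, map_add, map_add, map_add, map_add, map_add, hg7 w]
    abel
  constructor
  -- divisibility
  · letI : MulAction (Multiplicative (ZMod 7)) V := MulAction.compHom V ρ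
    have hsmul : ∀ (c : Multiplicative (ZMod 7)) (v : V),
        c • v = (ρ c : V →ₗ[ZMod 2] V) v := fun c v => rfl
    have hfp : MulAction.fixedPoints (Multiplicative (ZMod 7)) V = {0} := by
      ext v
      simp only [MulAction.mem_fixedPoints, Set.mem_singleton_iff]
      constructor
      · intro h
        exact hfix v (fun c => by rw [← hsmul]; exact h c)
      · rintro rfl c
        rw [hsmul]
        exact map_zero _
    haveI : Finite V := Module.finite_of_finite (ZMod 2)
    haveI : Fintype V := Fintype.ofFinite V
    haveI : Fact (Nat.Prime 7) := ⟨by norm_num⟩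
    have hpg : IsPGroup 7 (Multiplicative (ZMod 7)) := by
      apply IsPGroup.of_card (n := 1)
      simp [Nat.card_eq_fintype_card]
    have hmod := hpg.card_modEq_card_fixedPoints V
    have hfpcard : Nat.card (MulAction.fixedPoints (Multiplicative (ZMod 7)) V) = 1 := by
      rw [hfp]; simp
    have hcard : Nat.card V = 2 ^ Module.finrank (ZMod 2) V := by
      rw [Nat.card_eq_fintype_card, Module.card_eq_pow_finrank (K := ZMod 2), ZMod.card]
    rw [hfpcard, hcard] at hmod
    apply two_pow_mod7
    have h' : 2 ^ Module.finrank (ZMod 2) V % 7 = 1 % 7 := hmod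
    omega
  -- invariant 3-dimensional subspace
  · have main : ∃ u : V, u ≠ 0 ∧
        (g (g (g u)) = g u + u ∨ g (g (g u)) = g (g u) + u) := by
      by_cases hcase : ∃ u : V, u ≠ 0 ∧ g (g (g u)) = g u + u
      · obtain ⟨u, hu0, hA⟩ := hcase
        exact ⟨u, hu0, Or.inl hA⟩
      · push_neg at hcase
        obtain ⟨u, hu0⟩ := exists_ne (0 : V)
        refine ⟨u, hu0, Or.inr ?_⟩
        set s := g (g (g u)) + g (g u) + u with hs
        have e1 : g s = g (g (g (g u))) + g (g (g u)) + g u := by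
          rw [hs, map_add, map_add]
        have e2 : g (g s) = g (g (g (g (g u)))) + g (g (g (g u))) + g (g u) := by
          rw [e1, map_add, map_add]
        have e3 : g (g (g s)) = g (g (g (g (g (g u))))) + g (g (g (g (g u)))) +
            g (g (g u)) := by
          rw [e2, map_add, map_add]
        have hfs : g (g (g s)) = g s + s := by
          apply hadd
          rw [e3, e1, hs]
          have hab : g (g (g (g (g (g u))))) + g (g (g (g (g u)))) + g (g (g u)) +
              (g (g (g (g u))) + g (g (g u)) + g u + (g (g (g u)) + g (g u) + u)) =
              (u + g u + g (g u) + g (g (g u)) + g (g (g (g u))) + g (g (g (g (g u)))) +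
                g (g (g (g (g (g u)))))) + (g (g (g u)) + g (g (g u))) := by
            abel
          rw [hab, hsum u, hxx, add_zero]
        have hs0 : s = 0 := by
          by_contra hne
          exact hcase s hne hfs
        have : g (g (g u)) + (g (g u) + u) = 0 := by
          rw [← add_assoc]
          rw [hs] at hs0
          exact hs0
        exact hadd _ _ this
    obtain ⟨u, hu0, hrel⟩ := main
    obtain ⟨h3, hinv⟩ := span3 V g hfix1 ginj u hu0 hrel
    refine ⟨Submodule.span (ZMod 2) (Set.range ![u, g u, g (g u)]), h3, ?_⟩
    intro c w hw
    rw [hpow c]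
    generalize ZMod.val (Multiplicative.toAdd c) = k
    induction k generalizing w with
    | zero => simpa using hw
    | succ n ih =>
      rw [pow_succ, Module.End.mul_apply]
      exact ih (g w) (hinv w hw)
end

section
/- Let η be a generator of the multiplicative group F₈ˣ of the field F₈ = GF(2,3) with eight elements. Regard F₈ as a 3-dimensional vector space over F₂ = ZMod 2, and consider the two representations of the cyclic group C₇ = ZMod 7 on F₈ in which a fixed generator of C₇ acts by multiplication by η and by multiplication by η⁻¹, respectively. These two representations are not isomorphic as F₂-linear representations of C₇ (there is no F₂-linear isomorphism of F₈ intertwining the two actions). -/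
/-- Let `η` generate the multiplicative group of `F₈ = GF(2,3)`. The representations of
`C₇` on `F₈` (as a `3`-dimensional `F₂`-vector space) in which a fixed generator acts by
multiplication by `η`, respectively by `η⁻¹`, are not isomorphic: no `F₂`-linear
automorphism of `F₈` intertwines the two actions. -/
theorem mult_by_eta_not_isomorphic_to_mult_by_eta_inv
    (η : GaloisField 2 3)
    (hη : ∀ x : GaloisField 2 3, x ≠ 0 → ∃ n : ℕ, η ^ n = x) :
    ¬ ∃ e : GaloisField 2 3 ≃ₗ[ZMod 2] GaloisField 2 3,
        ∀ x : GaloisField 2 3, e (η * x) = η⁻¹ * e x := by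
  classical
  have : True := trivial
  haveI : Fintype (GaloisField 2 3) := Fintype.ofFinite _
  have h2 : (2 : GaloisField 2 3) = 0 := by
    have := CharP.cast_eq_zero (GaloisField 2 3) 2
    simpa using this
  have hcard : Fintype.card (GaloisField 2 3) = 8 := by
    have h := GaloisField.card 2 3 (by norm_num)
    simpa [Nat.card_eq_fintype_card] using h
  -- an element different from 0 and 1
  obtain ⟨x, hx0, hx1⟩ : ∃ x : GaloisField 2 3, x ≠ 0 ∧ x ≠ 1 := by
    by_contra h
    push_neg at h
    have hsub : (Finset.univ : Finset (GaloisField 2 3)) ⊆ {0, 1} := by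
      intro y _
      rcases eq_or_ne y 0 with hy | hy
      · simp [hy]
      · simp [h y hy]
    have := Finset.card_le_card hsub
    have h2' : ({0, 1} : Finset (GaloisField 2 3)).card ≤ 2 := Finset.card_insert_le _ _ |>.trans (by simp)
    rw [Finset.card_univ, hcard] at this
    omega
  have hη0 : η ≠ 0 := by
    rintro rfl
    obtain ⟨n, hn⟩ := hη x hx0
    cases n with
    | zero => exact hx1 hn.symm
    | succ m => exact hx0 (by simpa [zero_pow] using hn.symm)
  have hη1 : η ≠ 1 := by
    rintro rfl
    obtain ⟨n, hn⟩ := hη x hx0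
    exact hx1 (by simpa using hn.symm)
  have h7 : η ^ 7 = 1 := by
    have := FiniteField.pow_card_sub_one_eq_one η hη0
    rwa [hcard] at this
  rintro ⟨e, he⟩
  set c : GaloisField 2 3 := η⁻¹ with hcdef
  have hc : η * c = 1 := mul_inv_cancel₀ hη0
  set y : GaloisField 2 3 := e.symm 1 with hydef
  have hey : e y = 1 := e.apply_symm_apply 1
  have he2 : ∀ z : GaloisField 2 3, e (η ^ 2 * z) = c ^ 2 * e z := by
    intro z
    have : η ^ 2 * z = η * (η * z) := by ring
    rw [this, he, he]; ring
  have he3 : ∀ z : GaloisField 2 3, e (η ^ 3 * z) = c ^ 3 * e z := by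
    intro z
    have : η ^ 3 * z = η * (η ^ 2 * z) := by ring
    rw [this, he, he2]; ring
  -- factor η^7 - 1
  have hfac : (η + 1) * ((η ^ 3 + η + 1) * (η ^ 3 + η ^ 2 + 1)) = 0 := by
    linear_combination h7 + (η ^ 6 + η ^ 5 + 2 * η ^ 4 + 2 * η ^ 3 + η ^ 2 + η + 1) * h2
  have hηne1 : η + 1 ≠ 0 := by
    intro h
    apply hη1
    linear_combination h - h2
  rcases mul_eq_zero.mp hfac with h | h
  · exact hηne1 h
  rcases mul_eq_zero.mp h with hA | hB
  · -- η^3 + η + 1 = 0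
    have hzero : e (η ^ 3 * y + (η * y + y)) = 0 := by
      have : η ^ 3 * y + (η * y + y) = 0 := by linear_combination y * hA
      rw [this, map_zero]
    rw [map_add, map_add, he3, he, hey] at hzero
    have hc3 : c ^ 3 + c + 1 = 0 := by linear_combination hzero
    have h' : (η * c) ^ 3 + η ^ 2 * (η * c) + η ^ 3 = 0 := by
      linear_combination η ^ 3 * hc3
    rw [hc] at h'
    have hfin : η * (η + 1) = 0 := by
      linear_combination hA + h' - (η ^ 3 + 1) * h2
    rcases mul_eq_zero.mp hfin with h | h
    · exact hη0 h
    · exact hηne1 h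
  · -- η^3 + η^2 + 1 = 0
    have hzero : e (η ^ 3 * y + (η ^ 2 * y + y)) = 0 := by
      have : η ^ 3 * y + (η ^ 2 * y + y) = 0 := by linear_combination y * hB
      rw [this, map_zero]
    rw [map_add, map_add, he3, he2, hey] at hzero
    have hc3 : c ^ 3 + c ^ 2 + 1 = 0 := by linear_combination hzero
    have h' : (η * c) ^ 3 + η * (η * c) ^ 2 + η ^ 3 = 0 := by
      linear_combination η ^ 3 * hc3
    rw [hc] at h'
    have hfin : η * (η + 1) = 0 := by
      linear_combination hB + h' - (η ^ 3 + 1) * h2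
    rcases mul_eq_zero.mp hfin with h | h
    · exact hη0 h
    · exact hηne1 h
end

section
/- Let Q be the quadratic form on V = (Fin 8 → ZMod 2) defined by Q(x) = x₀x₁ + x₂x₃ + x₄x₅ + x₆x₇ (the hyperbolic, i.e., plus-type, quadratic form of rank 8 over F₂). If W₁ and W₂ are two 3-dimensional F₂-subspaces of V that are totally singular (Q vanishes identically on W₁ and on W₂), then there exists an F₂-linear automorphism φ of V with Q(φ(x)) = Q(x) for all x ∈ V and φ(W₁) = W₂. In other words, the orthogonal group O₈⁺(2) acts transitively on totally singular 3-dimensional subspaces. -/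
set_option maxRecDepth 40000

/-- The hyperbolic (plus-type) quadratic form of rank `8` over `F₂`:
`Q(x) = x₀x₁ + x₂x₃ + x₄x₅ + x₆x₇`. -/
def hypQ (x : Fin 8 → ZMod 2) : ZMod 2 :=
  x 0 * x 1 + x 2 * x 3 + x 4 * x 5 + x 6 * x 7

namespace O8aux

abbrev V8 := Fin 8 → ZMod 2
abbrev F2 := ZMod 2

/-- polar form -/
def Bf (x y : V8) : F2 :=
  x 0 * y 1 + x 1 * y 0 + x 2 * y 3 + x 3 * y 2 + x 4 * y 5 + x 5 * y 4 + x 6 * y 7 + x 7 * y 6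

lemma z2_add_self (a : F2) : a + a = 0 := by revert a; decide
lemma z2_mul_self (a : F2) : a * a = a := by revert a; decide
lemma z2_eq_one {a : F2} : a ≠ 0 → a = 1 := by revert a; decide

lemma Q_add (x y : V8) : hypQ (x + y) = hypQ x + hypQ y + Bf x y := by
  simp only [hypQ, Bf, Pi.add_apply]; ring

lemma Bf_add_left (x y z : V8) : Bf (x + y) z = Bf x z + Bf y z := by
  simp only [Bf, Pi.add_apply]; ring

lemma Bf_add_right (x y z : V8) : Bf x (y + z) = Bf x y + Bf x z := by
  simp only [Bf, Pi.add_apply]; ring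

lemma Bf_smul_left (a : F2) (x y : V8) : Bf (a • x) y = a * Bf x y := by
  simp only [Bf, Pi.smul_apply, smul_eq_mul]; ring

lemma Bf_smul_right (a : F2) (x y : V8) : Bf x (a • y) = a * Bf x y := by
  simp only [Bf, Pi.smul_apply, smul_eq_mul]; ring

lemma Bf_comm (x y : V8) : Bf x y = Bf y x := by
  simp only [Bf]; ring

lemma Bf_self (x : V8) : Bf x x = 0 := by
  simp only [Bf]
  have : ∀ a b : F2, a * b + b * a = 0 := by decide
  rw [mul_comm (x 1), mul_comm (x 3), mul_comm (x 5), mul_comm (x 7)]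
  rw [show x 0 * x 1 + x 0 * x 1 + x 2 * x 3 + x 2 * x 3 + x 4 * x 5 + x 4 * x 5 + x 6 * x 7 + x 6 * x 7
      = (x 0 * x 1 + x 0 * x 1) + (x 2 * x 3 + x 2 * x 3) + (x 4 * x 5 + x 4 * x 5) + (x 6 * x 7 + x 6 * x 7) by ring]
  simp [z2_add_self]

lemma Bf_zero_right (x : V8) : Bf x 0 = 0 := by simp [Bf]

lemma Q_smul (a : F2) (x : V8) : hypQ (a • x) = a * hypQ x := by
  have : hypQ (a • x) = (a * a) * hypQ x := by
    simp only [hypQ, Pi.smul_apply, smul_eq_mul]; ring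
  rw [this, z2_mul_self]

/-- nondegeneracy -/
lemma eq_zero_of_Bf (x : V8) (h : ∀ y, Bf x y = 0) : x = 0 := by
  funext i
  fin_cases i
  · simpa [Bf, Pi.single_apply] using h (Pi.single 1 1)
  · simpa [Bf, Pi.single_apply] using h (Pi.single 0 1)
  · simpa [Bf, Pi.single_apply] using h (Pi.single 3 1)
  · simpa [Bf, Pi.single_apply] using h (Pi.single 2 1)
  · simpa [Bf, Pi.single_apply] using h (Pi.single 5 1)
  · simpa [Bf, Pi.single_apply] using h (Pi.single 4 1)
  · simpa [Bf, Pi.single_apply] using h (Pi.single 7 1)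
  · simpa [Bf, Pi.single_apply] using h (Pi.single 6 1)

lemma exists_Bf_one {x : V8} (hx : x ≠ 0) : ∃ y, Bf x y = 1 := by
  by_contra h
  push_neg at h
  exact hx (eq_zero_of_Bf x fun y => by
    rcases eq_or_ne (Bf x y) 0 with h0 | h0
    · exact h0
    · exact absurd (z2_eq_one h0) (h y))

/-- On a totally singular subspace the polar form vanishes. -/
lemma Bf_eq_zero_of_mem {W : Submodule F2 V8} (hs : ∀ w ∈ W, hypQ w = 0)
    {x y : V8} (hx : x ∈ W) (hy : y ∈ W) : Bf x y = 0 := by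
  have h := Q_add x y
  rw [hs _ hx, hs _ hy, hs _ (W.add_mem hx hy)] at h
  simpa using h.symm


abbrev C6 := F2 × F2 × F2 × F2 × F2 × F2
def hyp6 (t : C6) : F2 := t.1 * t.2.1 + t.2.2.1 * t.2.2.2.1 + t.2.2.2.2.1 * t.2.2.2.2.2

lemma card_V8_sing : Fintype.card {x : V8 // hypQ x = 0} = 136 := by decide
lemma card_C6 : Fintype.card C6 = 64 := by decide
lemma card_V8 : Fintype.card V8 = 256 := by decide
lemma card_hyp6 (c : F2) :
    Fintype.card {t : C6 // c + hyp6 t = 0} = if c = 0 then 36 else 28 := by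
  revert c; decide

lemma hypQ_zero : hypQ (0 : V8) = 0 := by decide

lemma exists_perp_singular (x0 x1 x2 x3 x4 x5 : V8)
    (q0 : hypQ x0 = 0) (q1 : hypQ x1 = 0) (q2 : hypQ x2 = 0) (q3 : hypQ x3 = 0)
    (q4 : hypQ x4 = 0) (q5 : hypQ x5 = 0)
    (b01 : Bf x0 x1 = 1) (b23 : Bf x2 x3 = 1) (b45 : Bf x4 x5 = 1)
    (b02 : Bf x0 x2 = 0) (b03 : Bf x0 x3 = 0) (b04 : Bf x0 x4 = 0) (b05 : Bf x0 x5 = 0)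
    (b12 : Bf x1 x2 = 0) (b13 : Bf x1 x3 = 0) (b14 : Bf x1 x4 = 0) (b15 : Bf x1 x5 = 0)
    (b24 : Bf x2 x4 = 0) (b25 : Bf x2 x5 = 0) (b34 : Bf x3 x4 = 0) (b35 : Bf x3 x5 = 0) :
    ∃ g : V8, g ≠ 0 ∧ hypQ g = 0 ∧ Bf x0 g = 0 ∧ Bf x1 g = 0 ∧ Bf x2 g = 0 ∧
      Bf x3 g = 0 ∧ Bf x4 g = 0 ∧ Bf x5 g = 0 := by
  have b10 : Bf x1 x0 = 1 := by rw [Bf_comm]; exact b01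
  have b32 : Bf x3 x2 = 1 := by rw [Bf_comm]; exact b23
  have b54 : Bf x5 x4 = 1 := by rw [Bf_comm]; exact b45
  have b20 : Bf x2 x0 = 0 := by rw [Bf_comm]; exact b02
  have b30 : Bf x3 x0 = 0 := by rw [Bf_comm]; exact b03
  have b40 : Bf x4 x0 = 0 := by rw [Bf_comm]; exact b04
  have b50 : Bf x5 x0 = 0 := by rw [Bf_comm]; exact b05
  have b21 : Bf x2 x1 = 0 := by rw [Bf_comm]; exact b12
  have b31 : Bf x3 x1 = 0 := by rw [Bf_comm]; exact b13
  have b41 : Bf x4 x1 = 0 := by rw [Bf_comm]; exact b14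
  have b51 : Bf x5 x1 = 0 := by rw [Bf_comm]; exact b15
  have b42 : Bf x4 x2 = 0 := by rw [Bf_comm]; exact b24
  have b52 : Bf x5 x2 = 0 := by rw [Bf_comm]; exact b25
  have b43 : Bf x4 x3 = 0 := by rw [Bf_comm]; exact b34
  have b53 : Bf x5 x3 = 0 := by rw [Bf_comm]; exact b35
  by_contra hcon
  push_neg at hcon
  -- the perp subspace as a subtype
  set K := {y : V8 // Bf x0 y = 0 ∧ Bf x1 y = 0 ∧ Bf x2 y = 0 ∧ Bf x3 y = 0 ∧
      Bf x4 y = 0 ∧ Bf x5 y = 0} with hK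
  have h0K : (0 : V8) ∈ {y : V8 | Bf x0 y = 0 ∧ Bf x1 y = 0 ∧ Bf x2 y = 0 ∧ Bf x3 y = 0 ∧
      Bf x4 y = 0 ∧ Bf x5 y = 0} := by
    simp [Bf_zero_right]
  -- every nonzero element of K is nonsingular
  have hKns : ∀ k : K, (k : V8) ≠ 0 → hypQ (k : V8) = 1 := by
    rintro ⟨k, hk1, hk2, hk3, hk4, hk5, hk6⟩ hne
    refine z2_eq_one fun h0 => ?_
    exact hcon k hne h0 hk1 hk2 hk3 hk4 hk5 hk6
  -- the sum map
  set S : C6 → V8 := fun t =>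
    t.1 • x0 + t.2.1 • x1 + t.2.2.1 • x2 + t.2.2.2.1 • x3 + t.2.2.2.2.1 • x4 + t.2.2.2.2.2 • x5
    with hS
  set T : K × C6 → V8 := fun p => S p.2 + (p.1 : V8) with hT
  -- how Bf (x i) acts on T
  have key : ∀ (k : K) (t : C6),
      Bf x0 (T (k, t)) = t.2.1 ∧ Bf x1 (T (k, t)) = t.1 ∧
      Bf x2 (T (k, t)) = t.2.2.2.1 ∧ Bf x3 (T (k, t)) = t.2.2.1 ∧
      Bf x4 (T (k, t)) = t.2.2.2.2.2 ∧ Bf x5 (T (k, t)) = t.2.2.2.2.1 := by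
    rintro ⟨k, hk0, hk1, hk2, hk3, hk4, hk5⟩ t
    simp only [hT, hS, Bf_add_right, Bf_smul_right, b01, b23, b45, b02, b03, b04, b05, b12,
      b13, b14, b15, b24, b25, b34, b35, b10, b32, b54, b20, b30, b40, b50, b21, b31, b41,
      b51, b42, b52, b43, b53, Bf_self, hk0, hk1, hk2, hk3, hk4, hk5, mul_zero, mul_one,
      add_zero, zero_add]
    tauto
  have hTinj : Function.Injective T := by
    rintro ⟨k, t⟩ ⟨k', t'⟩ h
    obtain ⟨e0, e1, e2, e3, e4, e5⟩ := key k t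
    obtain ⟨f0, f1, f2, f3, f4, f5⟩ := key k' t'
    have ht : t = t' := by
      obtain ⟨a, b, c, d, e, f⟩ := t
      obtain ⟨a', b', c', d', e', f'⟩ := t'
      have g0 := e0; rw [h, f0] at g0
      have g1 := e1; rw [h, f1] at g1
      have g2 := e2; rw [h, f2] at g2
      have g3 := e3; rw [h, f3] at g3
      have g4 := e4; rw [h, f4] at g4
      have g5 := e5; rw [h, f5] at g5
      simp only at g0 g1 g2 g3 g4 g5
      simp [g0, g1, g2, g3, g4, g5]
    subst ht
    have : (k : V8) = (k' : V8) := by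
      have := h
      simp only [hT] at this
      exact add_left_cancel this
    exact Prod.ext (Subtype.ext this) rfl
  have hTsurj : Function.Surjective T := by
    intro x
    set t : C6 := (Bf x1 x, Bf x0 x, Bf x3 x, Bf x2 x, Bf x5 x, Bf x4 x) with ht
    have hneg : ∀ y : V8, -y = y := by
      intro y; funext i
      have : ∀ a : F2, -a = a := by decide
      simpa using this (y i)
    refine ⟨⟨⟨x - S t, ?_, ?_, ?_, ?_, ?_, ?_⟩, t⟩, ?_⟩
    · rw [sub_eq_add_neg, hneg, Bf_add_right]
      simp only [hS, ht, Bf_add_right, Bf_smul_right, b01, b02, b03, b04, b05, Bf_self,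
        mul_zero, mul_one, add_zero, zero_add]
      exact z2_add_self _
    · rw [sub_eq_add_neg, hneg, Bf_add_right]
      simp only [hS, ht, Bf_add_right, Bf_smul_right, b10, b12, b13, b14, b15, Bf_self,
        mul_zero, mul_one, add_zero, zero_add]
      exact z2_add_self _
    · rw [sub_eq_add_neg, hneg, Bf_add_right]
      simp only [hS, ht, Bf_add_right, Bf_smul_right, b20, b21, b23, b24, b25, Bf_self,
        mul_zero, mul_one, add_zero, zero_add]
      exact z2_add_self _
    · rw [sub_eq_add_neg, hneg, Bf_add_right]
      simp only [hS, ht, Bf_add_right, Bf_smul_right, b30, b31, b32, b34, b35, Bf_self,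
        mul_zero, mul_one, add_zero, zero_add]
      exact z2_add_self _
    · rw [sub_eq_add_neg, hneg, Bf_add_right]
      simp only [hS, ht, Bf_add_right, Bf_smul_right, b40, b41, b42, b43, b45, Bf_self,
        mul_zero, mul_one, add_zero, zero_add]
      exact z2_add_self _
    · rw [sub_eq_add_neg, hneg, Bf_add_right]
      simp only [hS, ht, Bf_add_right, Bf_smul_right, b50, b51, b52, b53, b54, Bf_self,
        mul_zero, mul_one, add_zero, zero_add]
      exact z2_add_self _
    · simp only [hT]
      abel
  -- value of Q on T
  have hQT : ∀ p : K × C6, hypQ (T p) = hypQ (p.1 : V8) + hyp6 p.2 := by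
    rintro ⟨⟨k, hk0, hk1, hk2, hk3, hk4, hk5⟩, t⟩
    have hBfSk : Bf (S t) k = 0 := by
      simp only [hS, Bf_add_left, Bf_smul_left, hk0, hk1, hk2, hk3, hk4, hk5, mul_zero,
        add_zero]
    have hQS : hypQ (S t) = hyp6 t := by
      simp only [hS, Q_add, Bf_add_left, Bf_smul_left, Bf_smul_right, Q_smul,
        q0, q1, q2, q3, q4, q5, b01, b23, b45, b02, b03, b04, b05, b12, b13, b14, b15, b24,
        b25, b34, b35, mul_zero, mul_one, add_zero, zero_add, hyp6]
      ring
    simp only [hT, Q_add, hQS, hBfSk, add_zero]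
    ring
  -- counting
  obtain ⟨e, he⟩ : ∃ e : K × C6 ≃ V8, ∀ p, e p = T p :=
    ⟨Equiv.ofBijective T ⟨hTinj, hTsurj⟩, fun p => rfl⟩
  have hcardK : Fintype.card K * 64 = 256 := by
    have := Fintype.card_congr e
    rw [Fintype.card_prod, card_C6, card_V8] at this
    exact this
  have hcardK4 : Fintype.card K = 4 := by omega
  have hchain : Fintype.card {x : V8 // hypQ x = 0}
      = Fintype.card {p : K × C6 // hypQ ((p.1 : V8)) + hyp6 p.2 = 0} := by
    refine Fintype.card_congr ((Equiv.subtypeEquiv e.symm ?_))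
    intro x
    have hx : T (e.symm x) = x := by
      have h1 := e.apply_symm_apply x
      rwa [he] at h1
    rw [← hQT (e.symm x), hx]
  have hsigma : Fintype.card {p : K × C6 // hypQ ((p.1 : V8)) + hyp6 p.2 = 0}
      = ∑ k : K, Fintype.card {t : C6 // hypQ ((k : V8)) + hyp6 t = 0} := by
    rw [Fintype.card_congr (Equiv.subtypeProdEquivSigmaSubtype
      (fun (k : K) (t : C6) => hypQ ((k : V8)) + hyp6 t = 0))]
    rw [Fintype.card_sigma]
  have hsummand : ∀ k : K, Fintype.card {t : C6 // hypQ ((k : V8)) + hyp6 t = 0}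
      = if (k : V8) = 0 then 36 else 28 := by
    intro k
    rcases eq_or_ne (k : V8) 0 with h | h
    · rw [if_pos h]
      have : Fintype.card {t : C6 // hypQ ((k : V8)) + hyp6 t = 0}
          = Fintype.card {t : C6 // (0 : F2) + hyp6 t = 0} :=
        Fintype.card_congr (Equiv.subtypeEquivRight (fun t => by rw [h, hypQ_zero]))
      rw [this]
      have := card_hyp6 0
      simpa using this
    · rw [if_neg h]
      have : Fintype.card {t : C6 // hypQ ((k : V8)) + hyp6 t = 0}
          = Fintype.card {t : C6 // (1 : F2) + hyp6 t = 0} :=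
        Fintype.card_congr (Equiv.subtypeEquivRight (fun t => by rw [hKns k h]))
      rw [this]
      have := card_hyp6 1
      simpa using this
  have hsum : ∑ k : K, (if (k : V8) = 0 then 36 else 28) = 120 := by
    have hk0 : ((⟨0, h0K⟩ : K) : V8) = 0 := rfl
    have : ∀ k : K, (if (k : V8) = 0 then (36:ℕ) else 28)
        = 28 + (if k = (⟨0, h0K⟩ : K) then 8 else 0) := by
      intro k
      rcases eq_or_ne (k : V8) 0 with h | h
      · rw [if_pos h, if_pos (Subtype.ext h)]
      · rw [if_neg h, if_neg (fun hh => h (by rw [hh]))]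
    rw [Finset.sum_congr rfl (fun k _ => this k), Finset.sum_add_distrib,
      Finset.sum_const, Finset.sum_ite_eq' Finset.univ (⟨0, h0K⟩ : K) (fun _ => 8),
      if_pos (Finset.mem_univ _), Finset.card_univ, hcardK4]
    norm_num
  have : (136 : ℕ) = 120 := by
    rw [← card_V8_sing, hchain, hsigma, Finset.sum_congr rfl (fun k _ => hsummand k), hsum]
  norm_num at this

set_option maxHeartbeats 1000000 in
lemma octet_equiv (u0 u1 u2 u3 u4 u5 u6 u7 : V8)
    (q0 : hypQ u0 = 0) (q1 : hypQ u1 = 0) (q2 : hypQ u2 = 0) (q3 : hypQ u3 = 0)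
    (q4 : hypQ u4 = 0) (q5 : hypQ u5 = 0) (q6 : hypQ u6 = 0) (q7 : hypQ u7 = 0)
    (b01 : Bf u0 u1 = 1) (b23 : Bf u2 u3 = 1) (b45 : Bf u4 u5 = 1) (b67 : Bf u6 u7 = 1)
    (b02 : Bf u0 u2 = 0) (b03 : Bf u0 u3 = 0) (b04 : Bf u0 u4 = 0) (b05 : Bf u0 u5 = 0)
    (b06 : Bf u0 u6 = 0) (b07 : Bf u0 u7 = 0)
    (b12 : Bf u1 u2 = 0) (b13 : Bf u1 u3 = 0) (b14 : Bf u1 u4 = 0) (b15 : Bf u1 u5 = 0)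
    (b16 : Bf u1 u6 = 0) (b17 : Bf u1 u7 = 0)
    (b24 : Bf u2 u4 = 0) (b25 : Bf u2 u5 = 0) (b26 : Bf u2 u6 = 0) (b27 : Bf u2 u7 = 0)
    (b34 : Bf u3 u4 = 0) (b35 : Bf u3 u5 = 0) (b36 : Bf u3 u6 = 0) (b37 : Bf u3 u7 = 0)
    (b46 : Bf u4 u6 = 0) (b47 : Bf u4 u7 = 0) (b56 : Bf u5 u6 = 0) (b57 : Bf u5 u7 = 0) :
    ∃ φ : V8 ≃ₗ[F2] V8, (∀ x, hypQ (φ x) = hypQ x) ∧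
      φ (Pi.single 0 1) = u0 ∧ φ (Pi.single 2 1) = u2 ∧ φ (Pi.single 4 1) = u4 := by
  have b10 : Bf u1 u0 = 1 := by rw [Bf_comm]; exact b01
  have b32 : Bf u3 u2 = 1 := by rw [Bf_comm]; exact b23
  have b54 : Bf u5 u4 = 1 := by rw [Bf_comm]; exact b45
  have b76 : Bf u7 u6 = 1 := by rw [Bf_comm]; exact b67
  have b20 : Bf u2 u0 = 0 := by rw [Bf_comm]; exact b02
  have b30 : Bf u3 u0 = 0 := by rw [Bf_comm]; exact b03
  have b40 : Bf u4 u0 = 0 := by rw [Bf_comm]; exact b04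
  have b50 : Bf u5 u0 = 0 := by rw [Bf_comm]; exact b05
  have b60 : Bf u6 u0 = 0 := by rw [Bf_comm]; exact b06
  have b70 : Bf u7 u0 = 0 := by rw [Bf_comm]; exact b07
  have b21 : Bf u2 u1 = 0 := by rw [Bf_comm]; exact b12
  have b31 : Bf u3 u1 = 0 := by rw [Bf_comm]; exact b13
  have b41 : Bf u4 u1 = 0 := by rw [Bf_comm]; exact b14
  have b51 : Bf u5 u1 = 0 := by rw [Bf_comm]; exact b15
  have b61 : Bf u6 u1 = 0 := by rw [Bf_comm]; exact b16
  have b71 : Bf u7 u1 = 0 := by rw [Bf_comm]; exact b17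
  have b42 : Bf u4 u2 = 0 := by rw [Bf_comm]; exact b24
  have b52 : Bf u5 u2 = 0 := by rw [Bf_comm]; exact b25
  have b62 : Bf u6 u2 = 0 := by rw [Bf_comm]; exact b26
  have b72 : Bf u7 u2 = 0 := by rw [Bf_comm]; exact b27
  have b43 : Bf u4 u3 = 0 := by rw [Bf_comm]; exact b34
  have b53 : Bf u5 u3 = 0 := by rw [Bf_comm]; exact b35
  have b63 : Bf u6 u3 = 0 := by rw [Bf_comm]; exact b36
  have b73 : Bf u7 u3 = 0 := by rw [Bf_comm]; exact b37
  have b64 : Bf u6 u4 = 0 := by rw [Bf_comm]; exact b46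
  have b74 : Bf u7 u4 = 0 := by rw [Bf_comm]; exact b47
  have b65 : Bf u6 u5 = 0 := by rw [Bf_comm]; exact b56
  have b75 : Bf u7 u5 = 0 := by rw [Bf_comm]; exact b57
  set φL : V8 →ₗ[F2] V8 :=
    { toFun := fun a => a 0 • u0 + a 1 • u1 + a 2 • u2 + a 3 • u3 + a 4 • u4 + a 5 • u5 +
        a 6 • u6 + a 7 • u7
      map_add' := by
        intro a b
        simp only [Pi.add_apply, add_smul]
        abel
      map_smul' := by
        intro c a
        simp only [Pi.smul_apply, smul_eq_mul, RingHom.id_apply, mul_smul, smul_add]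
    } with hφL
  have hQpres : ∀ a : V8, hypQ (φL a) = hypQ a := by
    intro a
    show hypQ (a 0 • u0 + a 1 • u1 + a 2 • u2 + a 3 • u3 + a 4 • u4 + a 5 • u5 +
        a 6 • u6 + a 7 • u7) = hypQ a
    simp only [Q_add, Bf_add_left, Bf_smul_left, Bf_smul_right, Q_smul,
      q0, q1, q2, q3, q4, q5, q6, q7,
      b01, b23, b45, b67, b02, b03, b04, b05, b06, b07, b12, b13, b14, b15, b16, b17,
      b24, b25, b26, b27, b34, b35, b36, b37, b46, b47, b56, b57,
      mul_zero, mul_one, add_zero, zero_add]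
    simp only [hypQ]
    ring
  have hinj : Function.Injective φL := by
    intro a b hab
    have h : φL (a - b) = 0 := by rw [map_sub, hab, sub_self]
    have h0 : a - b = 0 := by
      set c := a - b with hc
      have hsum : c 0 • u0 + c 1 • u1 + c 2 • u2 + c 3 • u3 + c 4 • u4 + c 5 • u5 +
          c 6 • u6 + c 7 • u7 = 0 := h
      funext i
      have key : ∀ z : V8, Bf z (c 0 • u0 + c 1 • u1 + c 2 • u2 + c 3 • u3 + c 4 • u4 +
          c 5 • u5 + c 6 • u6 + c 7 • u7) = Bf z 0 := fun z => by rw [hsum]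
      fin_cases i
      · have := key u1
        rw [Bf_zero_right] at this
        simp only [Bf_add_right, Bf_smul_right, b10, b12, b13, b14, b15, b16, b17, Bf_self,
          mul_zero, mul_one, add_zero, zero_add] at this
        exact this
      · have := key u0
        rw [Bf_zero_right] at this
        simp only [Bf_add_right, Bf_smul_right, b01, b02, b03, b04, b05, b06, b07, Bf_self,
          mul_zero, mul_one, add_zero, zero_add] at this
        exact this
      · have := key u3
        rw [Bf_zero_right] at this
        simp only [Bf_add_right, Bf_smul_right, b30, b31, b32, b34, b35, b36, b37, Bf_self,
          mul_zero, mul_one, add_zero, zero_add] at this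
        exact this
      · have := key u2
        rw [Bf_zero_right] at this
        simp only [Bf_add_right, Bf_smul_right, b20, b21, b23, b24, b25, b26, b27, Bf_self,
          mul_zero, mul_one, add_zero, zero_add] at this
        exact this
      · have := key u5
        rw [Bf_zero_right] at this
        simp only [Bf_add_right, Bf_smul_right, b50, b51, b52, b53, b54, b56, b57, Bf_self,
          mul_zero, mul_one, add_zero, zero_add] at this
        exact this
      · have := key u4
        rw [Bf_zero_right] at this
        simp only [Bf_add_right, Bf_smul_right, b40, b41, b42, b43, b45, b46, b47, Bf_self,
          mul_zero, mul_one, add_zero, zero_add] at this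
        exact this
      · have := key u7
        rw [Bf_zero_right] at this
        simp only [Bf_add_right, Bf_smul_right, b70, b71, b72, b73, b74, b75, b76, Bf_self,
          mul_zero, mul_one, add_zero, zero_add] at this
        exact this
      · have := key u6
        rw [Bf_zero_right] at this
        simp only [Bf_add_right, Bf_smul_right, b60, b61, b62, b63, b64, b65, b67, Bf_self,
          mul_zero, mul_one, add_zero, zero_add] at this
        exact this
    exact sub_eq_zero.mp h0
  have hsurj : Function.Surjective φL := (LinearMap.injective_iff_surjective).mp hinj
  refine ⟨LinearEquiv.ofBijective φL ⟨hinj, hsurj⟩, hQpres, ?_, ?_, ?_⟩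
  · show φL (Pi.single 0 1) = u0
    show (Pi.single 0 1 : V8) 0 • u0 + (Pi.single 0 1 : V8) 1 • u1 +
      (Pi.single 0 1 : V8) 2 • u2 + (Pi.single 0 1 : V8) 3 • u3 +
      (Pi.single 0 1 : V8) 4 • u4 + (Pi.single 0 1 : V8) 5 • u5 +
      (Pi.single 0 1 : V8) 6 • u6 + (Pi.single 0 1 : V8) 7 • u7 = u0
    norm_num [Pi.single_apply]
    simp (config := { decide := true })
  · show φL (Pi.single 2 1) = u2
    show (Pi.single 2 1 : V8) 0 • u0 + (Pi.single 2 1 : V8) 1 • u1 +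
      (Pi.single 2 1 : V8) 2 • u2 + (Pi.single 2 1 : V8) 3 • u3 +
      (Pi.single 2 1 : V8) 4 • u4 + (Pi.single 2 1 : V8) 5 • u5 +
      (Pi.single 2 1 : V8) 6 • u6 + (Pi.single 2 1 : V8) 7 • u7 = u2
    norm_num [Pi.single_apply]
    simp (config := { decide := true })
  · show φL (Pi.single 4 1) = u4
    show (Pi.single 4 1 : V8) 0 • u0 + (Pi.single 4 1 : V8) 1 • u1 +
      (Pi.single 4 1 : V8) 2 • u2 + (Pi.single 4 1 : V8) 3 • u3 +
      (Pi.single 4 1 : V8) 4 • u4 + (Pi.single 4 1 : V8) 5 • u5 +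
      (Pi.single 4 1 : V8) 6 • u6 + (Pi.single 4 1 : V8) 7 • u7 = u4
    norm_num [Pi.single_apply]
    simp (config := { decide := true })

lemma Qfix {x z : V8} (hz : hypQ z = 0) (h1 : Bf x z = 1) :
    hypQ (x + hypQ x • z) = 0 := by
  rw [Q_add, Q_smul, hz, Bf_smul_right, h1, mul_zero, mul_one, add_zero]
  exact z2_add_self _

/-- standard totally singular 3-space -/
def W0 : Submodule F2 V8 :=
  Submodule.span F2 {Pi.single 0 1, Pi.single 2 1, Pi.single 4 1}

set_option maxHeartbeats 2000000 in
lemma exists_iso_W (W : Submodule F2 V8) (hW : Module.finrank F2 W = 3)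
    (hs : ∀ w ∈ W, hypQ w = 0) :
    ∃ φ : V8 ≃ₗ[F2] V8, (∀ x, hypQ (φ x) = hypQ x) ∧
      W0.map (φ : V8 →ₗ[F2] V8) = W := by
  classical
  have hWB : ∀ {x y : V8}, x ∈ W → y ∈ W → Bf x y = 0 := fun hx hy =>
    Bf_eq_zero_of_mem hs hx hy
  -- a basis of W
  obtain ⟨w, hwW, hw_li⟩ : ∃ w : Fin 3 → V8, (∀ i, w i ∈ W) ∧ LinearIndependent F2 w := by
    have : Module.Finite F2 W := inferInstance
    let b := Module.finBasisOfFinrankEq F2 W hW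
    exact ⟨fun i => (b i : V8), fun i => (b i).2,
      b.linearIndependent.map' W.subtype W.ker_subtype⟩
  have hz3 : ∀ c0 c1 c2 : F2, c0 • w 0 + c1 • w 1 + c2 • w 2 = 0 →
      c0 = 0 ∧ c1 = 0 ∧ c2 = 0 := by
    intro c0 c1 c2 h
    have h2 := Fintype.linearIndependent_iff.mp hw_li
      (fun i => if i = 0 then c0 else if i = 1 then c1 else c2) ?_
    · refine ⟨?_, ?_, ?_⟩
      · have := h2 0; simpa using this
      · have := h2 1; simpa using this
      · have := h2 2; simpa using this
    · rw [Fin.sum_univ_three]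
      simpa using h
  set w0 := w 0 with hw0
  have w0W : w0 ∈ W := hwW 0
  have nz0 : w0 ≠ 0 := by
    intro h
    have := hz3 1 0 0 (by rw [h]; simp)
    simpa using this.1
  -- first hyperbolic partner
  obtain ⟨y1, hy1⟩ := exists_Bf_one nz0
  set f1 := y1 + hypQ y1 • w0 with hf1
  have Qf1 : hypQ f1 = 0 := Qfix (hs _ w0W) (by rw [Bf_comm]; exact hy1)
  have B0f1 : Bf w0 f1 = 1 := by
    rw [hf1, Bf_add_right, Bf_smul_right, hy1, Bf_self, mul_zero, add_zero]
  have Bf1w0 : Bf f1 w0 = 1 := by rw [Bf_comm]; exact B0f1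
  -- correct the other two basis vectors to be orthogonal to f1
  set wa := w 1 + Bf (w 1) f1 • w0 with hwa
  set wb := w 2 + Bf (w 2) f1 • w0 with hwb
  have waW : wa ∈ W := W.add_mem (hwW 1) (W.smul_mem _ w0W)
  have wbW : wb ∈ W := W.add_mem (hwW 2) (W.smul_mem _ w0W)
  have Baf1 : Bf wa f1 = 0 := by
    rw [hwa, Bf_add_left, Bf_smul_left, B0f1, mul_one]; exact z2_add_self _
  have Bbf1 : Bf wb f1 = 0 := by
    rw [hwb, Bf_add_left, Bf_smul_left, B0f1, mul_one]; exact z2_add_self _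
  have Bf1wa : Bf f1 wa = 0 := by rw [Bf_comm]; exact Baf1
  have Bf1wb : Bf f1 wb = 0 := by rw [Bf_comm]; exact Bbf1
  have nza : wa ≠ 0 := by
    intro h
    rw [hwa] at h
    have h' : (Bf (w 1) f1) • w 0 + (1 : F2) • w 1 + (0 : F2) • w 2 = 0 := by
      rw [one_smul, zero_smul, add_zero, add_comm]; exact h
    have := hz3 _ _ _ h'
    simpa using this.2.1
  -- second hyperbolic partner
  obtain ⟨y2, hy2⟩ := exists_Bf_one nza
  set y2' := y2 + Bf f1 y2 • w0 + Bf w0 y2 • f1 with hy2'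
  have B0y2' : Bf w0 y2' = 0 := by
    rw [hy2', Bf_add_right, Bf_add_right, Bf_smul_right, Bf_smul_right, Bf_self, B0f1,
      mul_zero, mul_one, add_zero]
    exact z2_add_self _
  have Bf1y2' : Bf f1 y2' = 0 := by
    rw [hy2', Bf_add_right, Bf_add_right, Bf_smul_right, Bf_smul_right, Bf_self, Bf1w0,
      mul_zero, mul_one, add_zero]
    exact z2_add_self _
  have Bay2' : Bf wa y2' = 1 := by
    rw [hy2', Bf_add_right, Bf_add_right, Bf_smul_right, Bf_smul_right, hWB waW w0W, Baf1,
      mul_zero, mul_zero, add_zero, add_zero, hy2]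
  set f2 := y2' + hypQ y2' • wa with hf2
  have Qf2 : hypQ f2 = 0 := Qfix (hs _ waW) (by rw [Bf_comm]; exact Bay2')
  have B0f2 : Bf w0 f2 = 0 := by
    rw [hf2, Bf_add_right, Bf_smul_right, B0y2', hWB w0W waW, mul_zero, add_zero]
  have Bf1f2 : Bf f1 f2 = 0 := by
    rw [hf2, Bf_add_right, Bf_smul_right, Bf1y2', Bf1wa, mul_zero, add_zero]
  have Baf2 : Bf wa f2 = 1 := by
    rw [hf2, Bf_add_right, Bf_smul_right, Bay2', Bf_self, mul_zero, add_zero]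
  have Bf2wa : Bf f2 wa = 1 := by rw [Bf_comm]; exact Baf2
  have Bf2w0 : Bf f2 w0 = 0 := by rw [Bf_comm]; exact B0f2
  have Bf2f1 : Bf f2 f1 = 0 := by rw [Bf_comm]; exact Bf1f2
  -- correct third basis vector
  set wc := wb + Bf wb f2 • wa with hwc
  have wcW : wc ∈ W := W.add_mem wbW (W.smul_mem _ waW)
  have Bcf1 : Bf wc f1 = 0 := by
    rw [hwc, Bf_add_left, Bf_smul_left, Bbf1, Baf1, mul_zero, add_zero]
  have Bcf2 : Bf wc f2 = 0 := by
    rw [hwc, Bf_add_left, Bf_smul_left, Baf2, mul_one]; exact z2_add_self _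
  have Bf1wc : Bf f1 wc = 0 := by rw [Bf_comm]; exact Bcf1
  have Bf2wc : Bf f2 wc = 0 := by rw [Bf_comm]; exact Bcf2
  have nzc : wc ≠ 0 := by
    intro h
    have hrep : (Bf (w 2) f1 + Bf wb f2 * Bf (w 1) f1) • w 0 + (Bf wb f2) • w 1 +
        (1 : F2) • w 2 = wc := by
      rw [hwc, hwb, hwa]
      simp only [smul_add, add_smul, smul_smul, one_smul]
      abel
    have := hz3 _ _ _ (by rw [hrep]; exact h)
    simpa using this.2.2
  -- third hyperbolic partner
  obtain ⟨y3, hy3⟩ := exists_Bf_one nzc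
  set y3' := y3 + Bf f1 y3 • w0 + Bf w0 y3 • f1 + Bf f2 y3 • wa + Bf wa y3 • f2 with hy3'
  have B0y3' : Bf w0 y3' = 0 := by
    rw [hy3']
    simp only [Bf_add_right, Bf_smul_right, Bf_self, B0f1, hWB w0W waW, B0f2,
      mul_zero, mul_one, add_zero]
    exact z2_add_self _
  have Bf1y3' : Bf f1 y3' = 0 := by
    rw [hy3']
    simp only [Bf_add_right, Bf_smul_right, Bf_self, Bf1w0, Bf1wa, Bf1f2,
      mul_zero, mul_one, add_zero]
    exact z2_add_self _
  have Bay3' : Bf wa y3' = 0 := by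
    rw [hy3']
    simp only [Bf_add_right, Bf_smul_right, Bf_self, hWB waW w0W, Baf1, Baf2,
      mul_zero, mul_one, add_zero]
    exact z2_add_self _
  have Bf2y3' : Bf f2 y3' = 0 := by
    rw [hy3']
    simp only [Bf_add_right, Bf_smul_right, Bf_self, Bf2w0, Bf2f1, Bf2wa,
      mul_zero, mul_one, add_zero]
    exact z2_add_self _
  have Bcy3' : Bf wc y3' = 1 := by
    rw [hy3']
    simp only [Bf_add_right, Bf_smul_right, hWB wcW w0W, hWB wcW waW, Bcf1, Bcf2,
      mul_zero, add_zero]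
    exact hy3
  set f3 := y3' + hypQ y3' • wc with hf3
  have Qf3 : hypQ f3 = 0 := Qfix (hs _ wcW) (by rw [Bf_comm]; exact Bcy3')
  have B0f3 : Bf w0 f3 = 0 := by
    rw [hf3, Bf_add_right, Bf_smul_right, B0y3', hWB w0W wcW, mul_zero, add_zero]
  have Bf1f3 : Bf f1 f3 = 0 := by
    rw [hf3, Bf_add_right, Bf_smul_right, Bf1y3', Bf1wc, mul_zero, add_zero]
  have Baf3 : Bf wa f3 = 0 := by
    rw [hf3, Bf_add_right, Bf_smul_right, Bay3', hWB waW wcW, mul_zero, add_zero]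
  have Bf2f3 : Bf f2 f3 = 0 := by
    rw [hf3, Bf_add_right, Bf_smul_right, Bf2y3', Bf2wc, mul_zero, add_zero]
  have Bcf3 : Bf wc f3 = 1 := by
    rw [hf3, Bf_add_right, Bf_smul_right, Bcy3', Bf_self, mul_zero, add_zero]
  have Bf3wc : Bf f3 wc = 1 := by rw [Bf_comm]; exact Bcf3
  have Bf3w0 : Bf f3 w0 = 0 := by rw [Bf_comm]; exact B0f3
  have Bf3f1 : Bf f3 f1 = 0 := by rw [Bf_comm]; exact Bf1f3
  have Bf3wa : Bf f3 wa = 0 := by rw [Bf_comm]; exact Baf3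
  have Bf3f2 : Bf f3 f2 = 0 := by rw [Bf_comm]; exact Bf2f3
  -- the singular vector in the perp of the hyperbolic 6-space
  obtain ⟨g, gnz, Qg, pg0, pg1, pg2, pg3, pg4, pg5⟩ :=
    exists_perp_singular w0 f1 wa f2 wc f3 (hs _ w0W) Qf1 (hs _ waW) Qf2 (hs _ wcW) Qf3
      B0f1 Baf2 Bcf3 (hWB w0W waW) B0f2 (hWB w0W wcW) B0f3 Bf1wa Bf1f2 Bf1wc Bf1f3
      (hWB waW wcW) Baf3 Bf2wc Bf2f3
  have Bgw0 : Bf g w0 = 0 := by rw [Bf_comm]; exact pg0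
  have Bgf1 : Bf g f1 = 0 := by rw [Bf_comm]; exact pg1
  have Bgwa : Bf g wa = 0 := by rw [Bf_comm]; exact pg2
  have Bgf2 : Bf g f2 = 0 := by rw [Bf_comm]; exact pg3
  have Bgwc : Bf g wc = 0 := by rw [Bf_comm]; exact pg4
  have Bgf3 : Bf g f3 = 0 := by rw [Bf_comm]; exact pg5
  -- partner of g
  obtain ⟨y4, hy4⟩ := exists_Bf_one gnz
  set y4' := y4 + Bf f1 y4 • w0 + Bf w0 y4 • f1 + Bf f2 y4 • wa + Bf wa y4 • f2 +
      Bf f3 y4 • wc + Bf wc y4 • f3 with hy4'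
  have B0y4' : Bf w0 y4' = 0 := by
    rw [hy4']
    simp only [Bf_add_right, Bf_smul_right, Bf_self, B0f1, hWB w0W waW, B0f2, hWB w0W wcW,
      B0f3, mul_zero, mul_one, add_zero]
    exact z2_add_self _
  have Bf1y4' : Bf f1 y4' = 0 := by
    rw [hy4']
    simp only [Bf_add_right, Bf_smul_right, Bf_self, Bf1w0, Bf1wa, Bf1f2, Bf1wc, Bf1f3,
      mul_zero, mul_one, add_zero]
    exact z2_add_self _
  have Bay4' : Bf wa y4' = 0 := by
    rw [hy4']
    simp only [Bf_add_right, Bf_smul_right, Bf_self, hWB waW w0W, Baf1, Baf2, hWB waW wcW,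
      Baf3, mul_zero, mul_one, add_zero]
    exact z2_add_self _
  have Bf2y4' : Bf f2 y4' = 0 := by
    rw [hy4']
    simp only [Bf_add_right, Bf_smul_right, Bf_self, Bf2w0, Bf2f1, Bf2wa, Bf2wc, Bf2f3,
      mul_zero, mul_one, add_zero]
    exact z2_add_self _
  have Bcy4' : Bf wc y4' = 0 := by
    rw [hy4']
    simp only [Bf_add_right, Bf_smul_right, Bf_self, hWB wcW w0W, Bcf1, hWB wcW waW, Bcf2,
      Bcf3, mul_zero, mul_one, add_zero]
    exact z2_add_self _
  have Bf3y4' : Bf f3 y4' = 0 := by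
    rw [hy4']
    simp only [Bf_add_right, Bf_smul_right, Bf_self, Bf3w0, Bf3f1, Bf3wa, Bf3f2, Bf3wc,
      mul_zero, mul_one, add_zero]
    exact z2_add_self _
  have Bgy4' : Bf g y4' = 1 := by
    rw [hy4']
    simp only [Bf_add_right, Bf_smul_right, Bgw0, Bgf1, Bgwa, Bgf2, Bgwc, Bgf3,
      mul_zero, add_zero]
    exact hy4
  set h := y4' + hypQ y4' • g with hh
  have Qh : hypQ h = 0 := Qfix Qg (by rw [Bf_comm]; exact Bgy4')
  have B0h : Bf w0 h = 0 := by
    rw [hh, Bf_add_right, Bf_smul_right, B0y4', pg0, mul_zero, add_zero]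
  have Bf1h : Bf f1 h = 0 := by
    rw [hh, Bf_add_right, Bf_smul_right, Bf1y4', pg1, mul_zero, add_zero]
  have Bah : Bf wa h = 0 := by
    rw [hh, Bf_add_right, Bf_smul_right, Bay4', pg2, mul_zero, add_zero]
  have Bf2h : Bf f2 h = 0 := by
    rw [hh, Bf_add_right, Bf_smul_right, Bf2y4', pg3, mul_zero, add_zero]
  have Bch : Bf wc h = 0 := by
    rw [hh, Bf_add_right, Bf_smul_right, Bcy4', pg4, mul_zero, add_zero]
  have Bf3h : Bf f3 h = 0 := by
    rw [hh, Bf_add_right, Bf_smul_right, Bf3y4', pg5, mul_zero, add_zero]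
  have Bgh : Bf g h = 1 := by
    rw [hh, Bf_add_right, Bf_smul_right, Bgy4', Bf_self, mul_zero, add_zero]
  -- assemble the isometry
  obtain ⟨φ, hφQ, hφ0, hφ2, hφ4⟩ := octet_equiv w0 f1 wa f2 wc f3 g h
    (hs _ w0W) Qf1 (hs _ waW) Qf2 (hs _ wcW) Qf3 Qg Qh
    B0f1 Baf2 Bcf3 Bgh
    (hWB w0W waW) B0f2 (hWB w0W wcW) B0f3 pg0 B0h
    Bf1wa Bf1f2 Bf1wc Bf1f3 pg1 Bf1h
    (hWB waW wcW) Baf3 pg2 Bah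
    Bf2wc Bf2f3 pg3 Bf2h
    pg4 Bch pg5 Bf3h
  refine ⟨φ, hφQ, ?_⟩
  -- image of the standard 3-space
  have himg : (φ : V8 →ₗ[F2] V8) '' {Pi.single 0 1, Pi.single 2 1, Pi.single 4 1}
      = {w0, wa, wc} := by
    rw [Set.image_insert_eq, Set.image_insert_eq, Set.image_singleton]
    simp only [LinearEquiv.coe_coe]
    rw [hφ0, hφ2, hφ4]
  have hmap : W0.map (φ : V8 →ₗ[F2] V8) = Submodule.span F2 {w0, wa, wc} := by
    rw [show W0 = Submodule.span F2 {Pi.single 0 1, Pi.single 2 1, Pi.single 4 1} from rfl,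
      Submodule.map_span, himg]
  rw [hmap]
  -- span {w0, wa, wc} = W
  have hle : Submodule.span F2 {w0, wa, wc} ≤ W := by
    rw [Submodule.span_le]
    rintro x (rfl | rfl | rfl)
    · exact w0W
    · exact waW
    · exact wcW
  have hli : LinearIndependent F2 ![w0, wa, wc] := by
    rw [Fintype.linearIndependent_iff]
    intro c hc i
    rw [Fin.sum_univ_three] at hc
    simp only [Matrix.cons_val_zero, Matrix.cons_val_one, Matrix.head_cons,
      Matrix.cons_val_two, Matrix.tail_cons] at hc
    have k0 : Bf f1 (c 0 • w0 + c 1 • wa + c 2 • wc) = c 0 := by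
      simp only [Bf_add_right, Bf_smul_right, Bf1w0, Bf1wa, Bf1wc, mul_zero, mul_one,
        add_zero]
    have k1 : Bf f2 (c 0 • w0 + c 1 • wa + c 2 • wc) = c 1 := by
      simp only [Bf_add_right, Bf_smul_right, Bf2w0, Bf2wa, Bf2wc, mul_zero, mul_one,
        add_zero, zero_add]
    have k2 : Bf f3 (c 0 • w0 + c 1 • wa + c 2 • wc) = c 2 := by
      simp only [Bf_add_right, Bf_smul_right, Bf3w0, Bf3wa, Bf3wc, mul_zero, mul_one,
        add_zero, zero_add]
    rw [hc, Bf_zero_right] at k0 k1 k2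
    fin_cases i
    · exact k0.symm
    · exact k1.symm
    · exact k2.symm
  have hrange : Set.range ![w0, wa, wc] = {w0, wa, wc} := by
    ext x
    simp only [Matrix.range_cons, Matrix.range_empty, Set.union_empty, Set.mem_insert_iff,
      Set.mem_singleton_iff, Set.mem_union]
  have hfr : Module.finrank F2 (Submodule.span F2 {w0, wa, wc}) = 3 := by
    rw [← hrange, finrank_span_eq_card hli]
    simp
  exact Submodule.eq_of_le_of_finrank_le hle (by rw [hfr, hW])

end O8aux

open O8aux in
/-- The orthogonal group `O₈⁺(2)` acts transitively on totally singular `3`-dimensional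
subspaces: any two `3`-dimensional subspaces of `F₂⁸` on which `Q` vanishes identically are
related by a linear automorphism preserving `Q`. -/
theorem O8plus2_transitive_on_totally_singular_3_spaces
    (W₁ W₂ : Submodule (ZMod 2) (Fin 8 → ZMod 2))
    (hW₁ : Module.finrank (ZMod 2) W₁ = 3) (hW₂ : Module.finrank (ZMod 2) W₂ = 3)
    (hsing₁ : ∀ w ∈ W₁, hypQ w = 0) (hsing₂ : ∀ w ∈ W₂, hypQ w = 0) :
    ∃ φ : (Fin 8 → ZMod 2) ≃ₗ[ZMod 2] (Fin 8 → ZMod 2),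
      (∀ x, hypQ (φ x) = hypQ x) ∧
      W₁.map (φ : (Fin 8 → ZMod 2) →ₗ[ZMod 2] (Fin 8 → ZMod 2)) = W₂ := by
  obtain ⟨φ₁, hQ1, hM1⟩ := exists_iso_W W₁ hW₁ hsing₁
  obtain ⟨φ₂, hQ2, hM2⟩ := exists_iso_W W₂ hW₂ hsing₂
  refine ⟨φ₁.symm.trans φ₂, ?_, ?_⟩
  · intro x
    have h1 : hypQ (φ₂ (φ₁.symm x)) = hypQ (φ₁.symm x) := hQ2 _
    have h2 : hypQ (φ₁ (φ₁.symm x)) = hypQ (φ₁.symm x) := hQ1 _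
    have h3 : φ₁ (φ₁.symm x) = x := φ₁.apply_symm_apply x
    show hypQ (φ₂ (φ₁.symm x)) = hypQ x
    rw [h1, ← h2, h3]
  · have hsymm : W₁.map (φ₁.symm : (Fin 8 → ZMod 2) →ₗ[ZMod 2] (Fin 8 → ZMod 2)) = W0 :=
      (Submodule.map_symm_eq_iff φ₁).mpr hM1
    have hcomp : W₁.map ((φ₁.symm.trans φ₂) : (Fin 8 → ZMod 2) →ₗ[ZMod 2] (Fin 8 → ZMod 2))
        = (W₁.map (φ₁.symm : (Fin 8 → ZMod 2) →ₗ[ZMod 2] (Fin 8 → ZMod 2))).map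
          (φ₂ : (Fin 8 → ZMod 2) →ₗ[ZMod 2] (Fin 8 → ZMod 2)) := by
      rw [← Submodule.map_comp]
      rfl
    rw [hcomp, hsymm, hM2]
end

section
/- Let G be a finite group of order 56 with a normal subgroup E that is elementary abelian of order 8, such that some (equivalently, every) element of order 7 in G acts by conjugation on E fixing no nonidentity element (so G is a Frobenius group of shape 2³:7). Then every faithful irreducible finite-dimensional complex representation of G has dimension 7, and its restriction to a subgroup of order 7 of G is isomorphic to the regular representation of the cyclic group of order 7; in particular each element of order 7 of G acts in such a representation with a nonzero fixed vector. -/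
/-!
Since `E` is abelian, it has a common eigenvector `v` in `V`, with character `χ`; the `E`-invariants
form a `G`-stable subspace, so faithfulness and irreducibility force `χ ≠ 1`. Let `g` have order 7.
The vectors `gⁱ v` are eigenvectors of `E` with characters `χ ∘ conj(g⁻ⁱ)`, and these are pairwise
distinct: a character fixed by a fixed-point-free automorphism `φ` is trivial, because every
element is of the form `b / φ b`. Hence `v, g v, …, g⁶ v` are linearly independent, and they span
`V` because `G = ⟨g⟩ E` and the orbit of `v` spans `V`. So `g` permutes a basis cyclically.
By Sylow's theorem every element of order 7 is conjugate to a generator of `⟨g⟩`, so acts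
fixed-point-freely on `E` as well, and the same applies to it.
-/

open Subgroup
open scoped Pointwise

section FixedPointFreeConj

variable {G : Type*} [Group G] {E : Subgroup G} [E.Normal]

theorem fixedPointFree_conjNormal_iff {g : G} :
    MonoidHom.FixedPointFree (MulAut.conjNormal (H := E) g) ↔
      ∀ x ∈ E, x ≠ 1 → g * x * g⁻¹ ≠ x := by
  refine ⟨fun h x hx hx1 hfix => hx1 ?_, fun h x hfix => ?_⟩
  · exact congrArg Subtype.val (h ⟨x, hx⟩ (Subtype.ext hfix))
  · by_contra hx1
    exact h x x.2 (fun h1 => hx1 (Subtype.ext h1)) (congrArg Subtype.val hfix)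

theorem exists_mem_zpowers_conj_of_orderOf_eq [Finite G] {p : ℕ} [Fact p.Prime]
    (hp : (Nat.card G).factorization p = 1) {g h : G} (hg : orderOf g = p)
    (hh : orderOf h = p) : ∃ c : G, g ∈ zpowers (c * h * c⁻¹) := by
  have hcard {x : G} (hx : orderOf x = p) :
      Nat.card (zpowers x) = p ^ (Nat.card G).factorization p := by
    rw [Nat.card_zpowers, hx, hp, pow_one]
  obtain ⟨c, hc⟩ :=
    MulAction.exists_smul_eq G (Sylow.ofCard _ (hcard hh)) (Sylow.ofCard _ (hcard hg))
  have hmap := congrArg (fun P : Sylow p G => (P : Subgroup G)) hc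
  change map (MulAut.conj c).toMonoidHom (zpowers h) = zpowers g at hmap
  rw [MonoidHom.map_zpowers] at hmap
  exact ⟨c, hmap ▸ mem_zpowers g⟩

namespace MonoidHom.FixedPointFree

theorem conjNormal_of_mem_zpowers {g h : G}
    (hg : FixedPointFree (MulAut.conjNormal (H := E) g)) (hgh : g ∈ zpowers h) :
    FixedPointFree (MulAut.conjNormal (H := E) h) := by
  intro x hx
  have hxh : h ∈ centralizer {(x : G)} :=
    mem_centralizer_singleton_iff.mpr (mul_inv_eq_iff_eq_mul.mp (congrArg Subtype.val hx))
  exact hg x (Subtype.ext (mul_inv_eq_of_eq_mul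
    (mem_centralizer_singleton_iff.mp (zpowers_le.mpr hxh hgh))))

theorem conjNormal_of_conj {g c : G}
    (hg : FixedPointFree (MulAut.conjNormal (H := E) (c * g * c⁻¹))) :
    FixedPointFree (MulAut.conjNormal (H := E) g) := by
  intro x hx
  simpa using hg (MulAut.conjNormal c x) (by simp [MulAut.mul_apply, hx])

theorem conjNormal_of_orderOf_eq [Finite G] {p : ℕ} [Fact p.Prime]
    (hp : (Nat.card G).factorization p = 1) {g h : G}
    (hfree : FixedPointFree (MulAut.conjNormal (H := E) g)) (hg : orderOf g = p)
    (hh : orderOf h = p) : FixedPointFree (MulAut.conjNormal (H := E) h) := by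
  obtain ⟨c, hc⟩ := exists_mem_zpowers_conj_of_orderOf_eq hp hg hh
  exact (hfree.conjNormal_of_mem_zpowers hc).conjNormal_of_conj

theorem eq_one_of_forall_map_eq {A F M : Type*} [Group A] [Finite A] [FunLike F A A]
    [MonoidHomClass F A A] [Monoid M] {φ : F} (hφ : FixedPointFree φ) (χ : A →* M)
    (hχ : ∀ a, χ (φ a) = χ a) : χ = 1 := by
  ext a
  obtain ⟨b, rfl⟩ := hφ.commutatorMap_surjective a
  rw [commutatorMap_apply, div_eq_mul_inv, map_mul, ← map_inv, hχ, ← map_mul, mul_inv_cancel,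
    map_one, MonoidHom.one_apply]

end MonoidHom.FixedPointFree

theorem pow_val_add_natCast {M : Type*} [Monoid M] {n : ℕ} [NeZero n] {g : M}
    (hg : orderOf g = n) (i : ZMod n) (k : ℕ) : g ^ (i + k).val = g ^ k * g ^ i.val := by
  rw [← pow_add, ← pow_mod_orderOf g (k + i.val), hg, ← ZMod.val_natCast, Nat.cast_add,
    ZMod.natCast_zmod_val, add_comm]

theorem injective_conjNormal_pow_symm [Finite G] {M : Type*} [Monoid M] {p : ℕ} [Fact p.Prime]
    {g : G} (hg : orderOf g = p)
    (hfree : MonoidHom.FixedPointFree (MulAut.conjNormal (H := E) g)) {χ : E →* M}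
    (hχ : χ ≠ 1) :
    Function.Injective fun (i : ZMod p) (x : E) => χ ((MulAut.conjNormal (g ^ i.val)).symm x) := by
  intro i j hij
  by_contra hne
  set d := i - j
  have hd : ¬ p ∣ d.val := Nat.not_dvd_of_pos_of_lt
    (Nat.pos_of_ne_zero ((ZMod.val_ne_zero d).mpr (sub_ne_zero.mpr hne))) (ZMod.val_lt d)
  have hfree_d : MonoidHom.FixedPointFree (MulAut.conjNormal (H := E) (g ^ d.val)) :=
    hfree.conjNormal_of_mem_zpowers <| mem_zpowers_pow_iff.mpr <| by
      rw [hg, Nat.gcd_comm]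
      exact (Nat.Prime.coprime_iff_not_dvd Fact.out).mpr hd
  have hgi : g ^ i.val = g ^ d.val * g ^ j.val := by
    rw [← pow_val_add_natCast hg, ZMod.natCast_zmod_val, add_sub_cancel]
  -- `i` and `j` giving the same character makes `ψ` invariant under conjugation by `g ^ d.val`
  let ψ : E →* M := χ.comp (MulAut.conjNormal (g ^ j.val)).symm.toMonoidHom
  have hψ : ψ = 1 := hfree_d.eq_one_of_forall_map_eq ψ fun y => by
    refine (congrFun hij (MulAut.conjNormal (g ^ d.val) y)).symm.trans
      (congrArg χ (Subtype.ext ?_))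
    simp only [MulEquiv.coe_toMonoidHom, MulAut.conjNormal_symm_apply, MulAut.conjNormal_apply,
      hgi]
    group
  refine hχ (MonoidHom.ext fun x => ?_)
  simpa [ψ] using DFunLike.congr_fun hψ (MulAut.conjNormal (g ^ j.val) x)

end FixedPointFreeConj

namespace Module.End

variable {K V : Type*} [Field K] [AddCommGroup V] [Module K V]

theorem exists_forall_apply_eq_smul_of_commute [IsAlgClosed K] [FiniteDimensional K V]
    [Nontrivial V] {ι : Type*} (f : ι → End K V) (hf : ∀ i j, Commute (f i) (f j)) :
    ∃ v : V, v ≠ 0 ∧ ∃ μ : ι → K, ∀ i, f i v = μ i • v := by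
  let S : Set (Submodule K V) := {W | W ≠ ⊥ ∧ ∀ i, Set.MapsTo (f i) W W}
  obtain ⟨W, ⟨hW, hWf⟩, hmin⟩ :=
    wellFounded_lt.has_min S ⟨⊤, top_ne_bot, fun i _ _ => trivial⟩
  -- the eigenspaces of `f i` inside the minimal `W` are again in `S`
  have hW_eigen (i : ι) : ∃ μ, W ≤ (f i).eigenspace μ := by
    have : Nontrivial W := Submodule.nontrivial_iff_ne_bot.mpr hW
    obtain ⟨μ, hμ⟩ := exists_eigenvalue ((f i).restrict (hWf i))
    obtain ⟨w, hw⟩ := hμ.exists_hasEigenvector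
    refine ⟨μ, by_contra fun hle => hmin (W ⊓ (f i).eigenspace μ) ⟨?_, fun j => ?_⟩
      (inf_lt_left.mpr hle)⟩
    · refine (Submodule.ne_bot_iff _).mpr ⟨w, ⟨w.2, ?_⟩, by simpa using hw.2⟩
      exact mem_eigenspace_iff.mpr (congrArg Subtype.val hw.apply_eq_smul)
    · exact (hWf j).inter_inter (mapsTo_genEigenspace_of_comm (hf i j) μ 1)
  choose μ hμ using hW_eigen
  obtain ⟨v, hvW, hv⟩ := (Submodule.ne_bot_iff W).mp hW
  exact ⟨v, hv, μ, fun i => mem_eigenspace_iff.mp (hμ i hvW)⟩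

theorem linearIndependent_of_forall_apply_eq_smul {ι κ : Type*} (f : ι → End K V)
    (hf : ∀ i j, Commute (f i) (f j)) {v : κ → V} (hv : ∀ k, v k ≠ 0) {μ : κ → ι → K}
    (hμ : Function.Injective μ) (hfv : ∀ k i, f i (v k) = μ k i • v k) :
    LinearIndependent K v := by
  have hind := independent_iInf_maxGenEigenspace_of_forall_mapsTo f
    fun i j φ => mapsTo_maxGenEigenspace_of_comm (hf j i) φ
  refine (hind.comp hμ).linearIndependent _ (fun k => ?_) hv
  exact Submodule.mem_iInf _ |>.mpr fun i =>
    eigenspace_le_maxGenEigenspace (mem_eigenspace_iff.mpr (hfv k i))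

end Module.End

theorem Module.Basis.repr_apply_of_apply_eq_add {ι R M : Type*} [AddGroup ι] [Semiring R]
    [AddCommMonoid M] [Module R M] (b : Module.Basis ι R M) {f : M →ₗ[R] M} {k : ι}
    (hf : ∀ i, f (b i) = b (i + k)) (v : M) (i : ι) : b.repr (f v) i = b.repr v (i - k) := by
  classical
  have : Finsupp.lapply i ∘ₗ b.repr.toLinearMap ∘ₗ f = Finsupp.lapply (i - k) ∘ₗ b.repr :=
    b.ext fun j => by
      simp only [LinearMap.comp_apply, LinearEquiv.coe_coe, hf, Module.Basis.repr_self,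
        Finsupp.lapply_apply, Finsupp.single_apply, eq_sub_iff_add_eq]
  exact LinearMap.congr_fun this v

theorem Module.Basis.sum_ne_zero {ι R M : Type*} [Fintype ι] [Nonempty ι] [Semiring R]
    [Nontrivial R] [AddCommMonoid M] [Module R M] (b : Module.Basis ι R M) : ∑ i, b i ≠ 0 := by
  intro h
  obtain ⟨i⟩ := ‹Nonempty ι›
  simpa [Finsupp.single_apply] using congrArg (fun v => b.repr v i) h

theorem MulEquiv.eq_symm_ofAdd_one_pow {H : Type*} [Monoid H] {n : ℕ} [NeZero n]
    (φ : H ≃* Multiplicative (ZMod n)) (x : H) :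
    x = φ.symm (Multiplicative.ofAdd 1) ^ (Multiplicative.toAdd (φ x)).val := by
  apply φ.injective
  rw [map_pow, apply_symm_apply, ← ofAdd_nsmul, nsmul_one, ZMod.natCast_zmod_val, ofAdd_toAdd]

namespace Representation

variable {K G V : Type*} [Field K] [AddCommGroup V] [Module K V]

theorem exists_monoidHom_apply_eq_smul [Monoid G] [IsMulCommutative G] [IsAlgClosed K]
    [FiniteDimensional K V] [Nontrivial V] (σ : Representation K G V) :
    ∃ χ : G →* K, ∃ v : V, v ≠ 0 ∧ ∀ a, σ a v = χ a • v := by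
  obtain ⟨v, hv, μ, hμ⟩ :=
    Module.End.exists_forall_apply_eq_smul_of_commute σ fun a b => Commute.map (mul_comm' a b) σ
  have hμ_mul (a b : G) : μ (a * b) = μ a * μ b := smul_left_injective K hv <| by
    change μ (a * b) • v = (μ a * μ b) • v
    rw [← hμ, map_mul, Module.End.mul_apply, hμ, map_smul, hμ, smul_smul, mul_comm]
  have hμ_one : μ 1 = 1 := smul_left_injective K hv <| by simp [← hμ]
  exact ⟨⟨⟨μ, hμ_one⟩, hμ_mul⟩, v, hv, hμ⟩

variable [Group G] (σ : Representation K G V)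

theorem span_range_apply_eq_top
    (hirr : ∀ W : Submodule K V, (∀ g, ∀ v ∈ W, σ g v ∈ W) → W = ⊥ ∨ W = ⊤)
    {v : V} (hv : v ≠ 0) : Submodule.span K (Set.range fun g => σ g v) = ⊤ := by
  refine (hirr _ fun g w hw => ?_).resolve_left fun h => hv ?_
  · refine Submodule.span_induction (fun _ ⟨h, hh⟩ => ?_) (by simp)
      (fun _ _ _ _ hx hy => by simpa using add_mem hx hy)
      (fun c _ _ hx => by simpa using Submodule.smul_mem _ c hx) hw
    exact Submodule.subset_span ⟨g * h, by simp [← hh]⟩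
  · have : v ∈ Submodule.span K (Set.range fun g => σ g v) := Submodule.subset_span ⟨1, by simp⟩
    rwa [h, Submodule.mem_bot] at this

theorem apply_apply_eq_smul_of_normal {E : Subgroup G} [E.Normal] {χ : E → K} {v : V}
    (hv : ∀ x : E, σ x v = χ x • v) (h : G) (x : E) :
    σ x (σ h v) = χ ((MulAut.conjNormal h).symm x) • σ h v := by
  rw [← map_smul, ← hv, ← Module.End.mul_apply, ← Module.End.mul_apply, ← map_mul, ← map_mul,
    MulAut.conjNormal_symm_apply]
  group

theorem apply_mem_invariants_comp_subtype {E : Subgroup G} [E.Normal] (h : G) {v : V}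
    (hv : v ∈ invariants (σ.comp E.subtype)) : σ h v ∈ invariants (σ.comp E.subtype) := by
  intro x
  simpa using apply_apply_eq_smul_of_normal σ (χ := 1) (fun y => by simpa using hv y) h x

theorem monoidHom_ne_one_of_apply_eq_smul
    (hirr : ∀ W : Submodule K V, (∀ g, ∀ v ∈ W, σ g v ∈ W) → W = ⊥ ∨ W = ⊤)
    {E : Subgroup G} [E.Normal] (hE : ∃ x ∈ E, σ x ≠ 1) {χ : E →* K} {v : V} (hv0 : v ≠ 0)
    (hv : ∀ x : E, σ x v = χ x • v) : χ ≠ 1 := by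
  rintro rfl
  have hvE : v ∈ invariants (σ.comp E.subtype) := fun x => by simpa using hv x
  have htop : invariants (σ.comp E.subtype) = ⊤ :=
    (hirr _ fun h w hw => apply_mem_invariants_comp_subtype σ h hw).resolve_left fun hbot =>
      hv0 <| by rwa [hbot, Submodule.mem_bot] at hvE
  obtain ⟨x, hx, hσx⟩ := hE
  refine hσx <| LinearMap.ext fun w => ?_
  have hw : w ∈ invariants (σ.comp E.subtype) := htop ▸ Submodule.mem_top
  exact hw ⟨x, hx⟩

theorem exists_basis_apply_pow_eq [Finite G] [IsAlgClosed K] [FiniteDimensional K V]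
    [Nontrivial V] {p : ℕ} [Fact p.Prime]
    (hirr : ∀ W : Submodule K V, (∀ g, ∀ v ∈ W, σ g v ∈ W) → W = ⊥ ∨ W = ⊤)
    {E : Subgroup G} [E.Normal] [IsMulCommutative E] (hE : ∃ x ∈ E, σ x ≠ 1) {g : G}
    (hg : orderOf g = p) (hfree : MonoidHom.FixedPointFree (MulAut.conjNormal (H := E) g))
    (hgE : zpowers g ⊔ E = ⊤) :
    ∃ b : Module.Basis (ZMod p) K V, ∀ (k : ℕ) (i : ZMod p), σ (g ^ k) (b i) = b (i + k) := by
  obtain ⟨χ, v, hv0, hv⟩ := exists_monoidHom_apply_eq_smul (σ.comp E.subtype)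
  let u : ZMod p → V := fun i => σ (g ^ i.val) v
  have hshift (k : ℕ) (i : ZMod p) : σ (g ^ k) (u i) = u (i + k) := by
    simp only [u, pow_val_add_natCast hg, map_mul, Module.End.mul_apply]
  have hli : LinearIndependent K u :=
    Module.End.linearIndependent_of_forall_apply_eq_smul (fun x : E => σ x)
      (fun x y => Commute.map (mul_comm' x y) (σ.comp E.subtype))
      (fun i hu => hv0 <| (σ.inv_self_apply (g ^ i.val) v).symm.trans <| by
        rw [show σ (g ^ i.val) v = 0 from hu, map_zero])
      (injective_conjNormal_pow_symm hg hfree (monoidHom_ne_one_of_apply_eq_smul σ hirr hE hv0 hv))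
      fun i x => apply_apply_eq_smul_of_normal σ hv _ x
  have hspan : ⊤ ≤ Submodule.span K (Set.range u) := by
    rw [← span_range_apply_eq_top σ hirr hv0, Submodule.span_le]
    rintro _ ⟨h, rfl⟩
    obtain ⟨a, ha, x, hx, rfl⟩ : h ∈ (zpowers g : Set G) * (E : Set G) := by
      rw [← mul_normal, hgE]; trivial
    obtain ⟨k, rfl⟩ := mem_powers_iff_mem_zpowers.mpr ha
    have hu0 : σ (g ^ k) v = u k := by simpa [u] using hshift k 0
    simp only [SetLike.mem_coe]
    rw [map_mul, Module.End.mul_apply, show σ x v = χ ⟨x, hx⟩ • v from hv ⟨x, hx⟩, map_smul, hu0]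
    exact Submodule.smul_mem _ _ (Submodule.subset_span ⟨_, rfl⟩)
  exact ⟨Module.Basis.mk hli hspan, fun k i => by
    rw [Module.Basis.mk_apply, Module.Basis.mk_apply, hshift]⟩

theorem repr_apply_of_apply_pow_eq {H : Type*} [Monoid H] {n : ℕ} [NeZero n]
    (τ : Representation K H V) (φ : H ≃* Multiplicative (ZMod n)) (b : Module.Basis (ZMod n) K V)
    (hb : ∀ (k : ℕ) (i : ZMod n), τ (φ.symm (Multiplicative.ofAdd 1) ^ k) (b i) = b (i + k))
    (x : H) (v : V) (i : ZMod n) : b.repr (τ x v) i = b.repr v (i - Multiplicative.toAdd (φ x)) :=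
  b.repr_apply_of_apply_eq_add (fun j => by
    conv_lhs => rw [φ.eq_symm_ofAdd_one_pow x]
    rw [hb, ZMod.natCast_zmod_val]) v i

end Representation

theorem frobenius_2_3_7_faithful_irreducible_rep_general
    (G : Type) [Group G] [Finite G] (hG : Nat.card G = 56)
    (E : Subgroup G) [E.Normal]
    (hE_card : Nat.card E = 8)
    (hE_ab : ∀ x ∈ E, ∀ y ∈ E, x * y = y * x)
    (hfree : ∃ g : G, orderOf g = 7 ∧ ∀ x ∈ E, x ≠ 1 → g * x * g⁻¹ ≠ x)
    (V : Type) [AddCommGroup V] [Module ℂ V] [FiniteDimensional ℂ V]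
    (hV : Nontrivial V)
    (ρ : G →* (V →ₗ[ℂ] V)ˣ)
    (hρ : Function.Injective ρ)
    (hirr : ∀ W : Submodule ℂ V, (∀ g : G, ∀ v ∈ W, (ρ g : V →ₗ[ℂ] V) v ∈ W) →
      W = ⊥ ∨ W = ⊤) :
    Module.finrank ℂ V = 7 ∧
    (∀ H : Subgroup G, Nat.card H = 7 →
      ∃ (φ : H ≃* Multiplicative (ZMod 7)) (e : V ≃ₗ[ℂ] (ZMod 7 → ℂ)),
        ∀ (x : H) (v : V) (i : ZMod 7),
          e ((ρ (x : G) : V →ₗ[ℂ] V) v) i = e v (i - Multiplicative.toAdd (φ x))) ∧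
    ∀ g : G, orderOf g = 7 → ∃ v : V, v ≠ 0 ∧ (ρ g : V →ₗ[ℂ] V) v = v := by
  have : Fact (Nat.Prime 7) := ⟨by norm_num⟩
  have : IsMulCommutative E := ⟨⟨fun x y => Subtype.ext (hE_ab _ x.2 _ y.2)⟩⟩
  let σ : Representation ℂ G V := (Units.coeHom _).comp ρ
  have hσE : ∃ x ∈ E, σ x ≠ 1 := by
    obtain ⟨x, hx, hx1⟩ := E.bot_or_exists_ne_one.resolve_left fun h => by simp [h] at hE_card
    exact ⟨x, hx, fun h => hx1 (hρ (Units.ext (by simpa [σ] using h)))⟩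
  have hG7 : (Nat.card G).factorization 7 = 1 := by
    rw [hG, show (56 : ℕ) = 7 * 8 by norm_num,
      Nat.factorization_mul_apply_of_coprime (by norm_num),
      Nat.Prime.factorization_self (by norm_num),
      Nat.factorization_eq_zero_of_not_dvd (by norm_num)]
  obtain ⟨g₀, hg₀, hfree₀⟩ := hfree
  have hbasis (g : G) (hg : orderOf g = 7) :
      ∃ b : Module.Basis (ZMod 7) ℂ V, ∀ (k : ℕ) (i : ZMod 7), σ (g ^ k) (b i) = b (i + k) := by
    refine σ.exists_basis_apply_pow_eq hirr hσE hg
      ((fixedPointFree_conjNormal_iff.mpr hfree₀).conjNormal_of_orderOf_eq hG7 hg₀ hg)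
      (isComplement'_of_coprime ?_ ?_).sup_eq_top
    · rw [Nat.card_zpowers, hg, hE_card, hG]
    · rw [Nat.card_zpowers, hg, hE_card]; norm_num
  refine ⟨?_, fun H hH => ?_, fun g hg => ?_⟩
  · obtain ⟨b, -⟩ := hbasis g₀ hg₀
    rw [Module.finrank_eq_card_basis b, ZMod.card]
  · let φ : H ≃* Multiplicative (ZMod 7) := mulEquivOfPrimeCardEq hH (by simp)
    obtain ⟨b, hb⟩ := hbasis (φ.symm (Multiplicative.ofAdd 1)) <| by
      rw [Subgroup.orderOf_coe, MulEquiv.orderOf_eq, orderOf_ofAdd_eq_addOrderOf,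
        ZMod.addOrderOf_one]
    exact ⟨φ, b.equivFun, Representation.repr_apply_of_apply_pow_eq (σ.comp H.subtype) φ b hb⟩
  · obtain ⟨b, hb⟩ := hbasis g hg
    have hb1 (i : ZMod 7) : σ g (b i) = b (i + 1) := by simpa using hb 1 i
    refine ⟨∑ i, b i, b.sum_ne_zero, ?_⟩
    change σ g _ = _
    rw [map_sum]
    simp only [hb1]
    exact Equiv.sum_comp (Equiv.addRight 1) b

/-- Let `G` be a Frobenius group of order `56` of shape `2³:7`: it has a normal elementary
abelian subgroup `E` of order `8` on which some element of order `7` acts by conjugation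
fixing no nonidentity element. Then every faithful irreducible finite-dimensional complex
representation of `G` has dimension `7`, its restriction to any subgroup of order `7` is
isomorphic to the regular representation of the cyclic group of order `7`, and in particular
every element of order `7` of `G` acts with a nonzero fixed vector. -/
theorem frobenius_2_3_7_faithful_irreducible_rep
    (G : Type) [Group G] [Finite G] (hG : Nat.card G = 56)
    (E : Subgroup G) [E.Normal]
    (hE_card : Nat.card E = 8)
    (hE_sq : ∀ x ∈ E, x ^ 2 = 1)
    (hE_ab : ∀ x ∈ E, ∀ y ∈ E, x * y = y * x)
    (hfree : ∃ g : G, orderOf g = 7 ∧ ∀ x ∈ E, x ≠ 1 → g * x * g⁻¹ ≠ x)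
    (V : Type) [AddCommGroup V] [Module ℂ V] [FiniteDimensional ℂ V]
    (hV : Nontrivial V)
    (ρ : G →* (V →ₗ[ℂ] V)ˣ)
    (hρ : Function.Injective ρ)
    (hirr : ∀ W : Submodule ℂ V, (∀ g : G, ∀ v ∈ W, (ρ g : V →ₗ[ℂ] V) v ∈ W) →
      W = ⊥ ∨ W = ⊤) :
    Module.finrank ℂ V = 7 ∧
    (∀ H : Subgroup G, Nat.card H = 7 →
      ∃ (φ : H ≃* Multiplicative (ZMod 7)) (e : V ≃ₗ[ℂ] (ZMod 7 → ℂ)),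
        ∀ (x : H) (v : V) (i : ZMod 7),
          e ((ρ (x : G) : V →ₗ[ℂ] V) v) i = e v (i - Multiplicative.toAdd (φ x))) ∧
    ∀ g : G, orderOf g = 7 → ∃ v : V, v ≠ 0 ∧ (ρ g : V →ₗ[ℂ] V) v = v :=
  frobenius_2_3_7_faithful_irreducible_rep_general G hG E hE_card hE_ab hfree V hV ρ hρ hirr
end
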